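/- arXiv:math/0404525 — 10 statements merged into one kernel-verified Lean document; each statement's English description precedes it below -/
import Mathlib

section
/- Let f : X → Y be a (Λ,λ)-quasi-isometric map between metric spaces, with Λ ≥ 1 and λ ≥ 0, and suppose Y is (N,R)-bounded for some N ∈ 𝒩 and R ∈ ℛ. Then X is (N',R')-bounded, where N'(ρ) = N(ρ/(2Λ²)) for every ρ ∈ (0,1), and R' ∈ ℛ is some function depending only on R, Λ and λ. In particular, if Y is an UBG-space then X is an UBG-space. -/
open Metric Set ENNReal

/-- A subset `A` of a metric space is `(N,R)`-bounded: for every `ρ ∈ (0,1)` and every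
`r ≥ R ρ`, every ball of radius `r` in `A` (with the induced metric) contains at most
`N ρ` points that are pairwise at distance `≥ ρ·r`. -/
def SubsetNRBounded {X : Type*} [MetricSpace X] (A : Set X) (N : ℝ → ℕ) (R : ℝ → ℝ) : Prop :=
  ∀ ρ : ℝ, 0 < ρ → ρ < 1 → ∀ r : ℝ, R ρ ≤ r → ∀ a ∈ A, ∀ S : Finset X,
    (S : Set X) ⊆ A ∩ Metric.closedBall a r →
    ((S : Set X).Pairwise fun p q => ρ * r ≤ dist p q) → S.card ≤ N ρ

/-- A metric space is `(N,R)`-bounded. -/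
def IsNRBounded (X : Type*) [MetricSpace X] (N : ℝ → ℕ) (R : ℝ → ℝ) : Prop :=
  SubsetNRBounded (Set.univ : Set X) N R

/-- A metric space has uniformly bounded growth rate (is an UBG-space) if it is
`(N,R)`-bounded for some `N ∈ 𝒩` and `R ∈ ℛ`. -/
def IsUBG (X : Type*) [MetricSpace X] : Prop :=
  ∃ N : ℝ → ℕ, ∃ R : ℝ → ℝ, (∀ ρ, 0 ≤ R ρ) ∧ IsNRBounded X N R


lemma qi_aux {X : Type*} {Y : Type*} [MetricSpace X] [MetricSpace Y] (f : X → Y)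
    (Λ lam : ℝ) (hΛ : 1 ≤ Λ) (hlam : 0 ≤ lam)
    (hqi : ∀ x x' : X, dist x x' / Λ - lam ≤ dist (f x) (f x') ∧
      dist (f x) (f x') ≤ Λ * dist x x' + lam)
    (N : ℝ → ℕ) (R : ℝ → ℝ) (hR : ∀ ρ, 0 ≤ R ρ) (hY : IsNRBounded Y N R) :
    IsNRBounded X (fun ρ => N (ρ / (2 * Λ ^ 2)))
      (fun ρ => max (max (R (ρ / (2 * Λ ^ 2))) 0) ((2 * Λ + 1) * lam / ρ)) := by
  classical
  intro ρ hρ0 hρ1 r hr a _ S hS hpair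
  have hΛ0 : (0:ℝ) < Λ := lt_of_lt_of_le one_pos hΛ
  set ρ' := ρ / (2 * Λ ^ 2) with hρ'def
  have h2Λ : (0:ℝ) < 2 * Λ ^ 2 := by positivity
  have hρ'0 : 0 < ρ' := by positivity
  have hρ'1 : ρ' < 1 := by
    rw [hρ'def, div_lt_one h2Λ]; nlinarith
  have hρ'mul : ρ' * (2 * Λ ^ 2) = ρ := div_mul_cancel₀ _ (ne_of_gt h2Λ)
  have hr0 : 0 ≤ r := le_trans (le_max_of_le_left (le_max_right _ _)) hr
  have hrR : R ρ' ≤ r := le_trans (le_max_of_le_left (le_max_left _ _)) hr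
  have hrlam : (2 * Λ + 1) * lam ≤ ρ * r := by
    have h := le_trans (le_max_right _ _) hr
    rw [div_le_iff₀ hρ0] at h
    nlinarith
  -- distances within the ball
  have hball : ∀ p ∈ S, dist p a ≤ r := by
    intro p hp
    have := hS hp
    exact (this.2 : p ∈ Metric.closedBall a r)
  -- injectivity of f on S
  have hinj : Set.InjOn f ↑S := by
    intro p hp q hq hfeq
    by_contra hne
    have h1 : ρ * r ≤ dist p q := hpair hp hq hne
    have h2 : dist p q / Λ - lam ≤ 0 := by
      have := (hqi p q).1
      rw [hfeq, dist_self] at this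
      exact this
    have h3 : dist p q ≤ lam * Λ := (div_le_iff₀ hΛ0).mp (by linarith)
    have h4 : 0 < dist p q := dist_pos.2 hne
    nlinarith
  have hr' : R ρ' ≤ Λ * r + lam := by nlinarith
  have key := hY ρ' hρ'0 hρ'1 (Λ * r + lam) hr' (f a) (mem_univ _) (S.image f)
    (by
      intro y hy
      simp only [Finset.coe_image, Set.mem_image, Finset.mem_coe] at hy
      obtain ⟨p, hp, rfl⟩ := hy
      refine ⟨mem_univ _, ?_⟩
      have h1 := (hqi p a).2
      have h2 := hball p hp
      simp only [Metric.mem_closedBall]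
      nlinarith)
    (by
      intro y1 hy1 y2 hy2 hne
      simp only [Finset.coe_image, Set.mem_image, Finset.mem_coe] at hy1 hy2
      obtain ⟨p, hp, rfl⟩ := hy1
      obtain ⟨q, hq, rfl⟩ := hy2
      have hpq : p ≠ q := fun h => hne (by rw [h])
      have h1 : ρ * r ≤ dist p q := hpair hp hq hpq
      have h2 := (hqi p q).1
      have ht : Λ * (dist p q / Λ) = dist p q := mul_div_cancel₀ _ (ne_of_gt hΛ0)
      set t := dist p q / Λ with htdef
      have h5 : ρ * r ≤ Λ * t := by rw [ht]; exact h1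
      have h6 : 2 * Λ * ρ' ≤ ρ := by
        have he : 2 * Λ * ρ' = ρ / Λ := by
          rw [hρ'def]; field_simp
        rw [he]; exact div_le_self hρ0.le hΛ
      nlinarith [mul_nonneg hlam (sub_nonneg.2 (le_trans h6 hρ1.le)),
        mul_nonneg hρ'0.le hr0, mul_nonneg hρ'0.le hlam,
        mul_le_mul_of_nonneg_right h6 (mul_nonneg hlam hΛ0.le)])
  have hcard : S.card = (S.image f).card := (Finset.card_image_of_injOn hinj).symm
  rw [hcard]
  exact key

/-- Lemma 2.3 (plus the "in particular" consequence): if `f : X → Y` is a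
`(Λ,λ)`-quasi-isometric map and `Y` is `(N,R)`-bounded, then `X` is `(N',R')`-bounded,
where `N' ρ = N (ρ / (2Λ²))` and `R'` depends only on `R`, `Λ` and `λ`.  In particular,
if `Y` is an UBG-space then so is `X`. -/
theorem quasiIsometric_pullback_NRBounded :
    (∃ R' : (ℝ → ℝ) → ℝ → ℝ → (ℝ → ℝ),
      ∀ (X : Type u) (Y : Type v) [MetricSpace X] [MetricSpace Y] (f : X → Y)
        (Λ lam : ℝ), 1 ≤ Λ → 0 ≤ lam →
        (∀ x x' : X, dist x x' / Λ - lam ≤ dist (f x) (f x') ∧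
          dist (f x) (f x') ≤ Λ * dist x x' + lam) →
        ∀ (N : ℝ → ℕ) (R : ℝ → ℝ), (∀ ρ, 0 ≤ R ρ) → IsNRBounded Y N R →
          (∀ ρ, 0 ≤ R' R Λ lam ρ) ∧
            IsNRBounded X (fun ρ => N (ρ / (2 * Λ ^ 2))) (R' R Λ lam)) ∧
    ∀ (X : Type u) (Y : Type v) [MetricSpace X] [MetricSpace Y] (f : X → Y)
      (Λ lam : ℝ), 1 ≤ Λ → 0 ≤ lam →
      (∀ x x' : X, dist x x' / Λ - lam ≤ dist (f x) (f x') ∧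
        dist (f x) (f x') ≤ Λ * dist x x' + lam) →
      IsUBG Y → IsUBG X := by
  refine ⟨⟨fun R Λ lam ρ => max (max (R (ρ / (2 * Λ ^ 2))) 0) ((2 * Λ + 1) * lam / ρ), ?_⟩, ?_⟩
  · intro X Y _ _ f Λ lam hΛ hlam hqi N R hR hY
    exact ⟨fun ρ => le_max_of_le_left (le_max_right _ _),
      qi_aux f Λ lam hΛ hlam hqi N R hR hY⟩
  · rintro X Y _ _ f Λ lam hΛ hlam hqi ⟨N, R, hR, hY⟩
    exact ⟨fun ρ => N (ρ / (2 * Λ ^ 2)),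
      fun ρ => max (max (R (ρ / (2 * Λ ^ 2))) 0) ((2 * Λ + 1) * lam / ρ),
      fun ρ => le_max_of_le_left (le_max_right _ _),
      qi_aux f Λ lam hΛ hlam hqi N R hR hY⟩
end

section
/- The property of having uniformly bounded growth rate is a quasi-isometry invariant: if f : X → Y is a quasi-isometric map of metric spaces and Y is an UBG-space, then X is an UBG-space; consequently, if there is a quasi-isometric map f : X → Y whose image is cobounded in Y (i.e. there is λ ≥ 0 such that every point of Y lies within distance λ of f(X)), then X is an UBG-space if and only if Y is an UBG-space. -/
/-!
Once `r ≥ 2Λλ/ρ`, a `(Λ, λ)`-quasi-isometric map sends a `ρr`-separated subset of an `r`-ball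
injectively onto a `ρr/(2Λ)`-separated subset of a `2Λr`-ball, i.e. a subset separated at the
scale `ρ/(4Λ²)` relative to that ball. So if `Y` is `(N, R)`-bounded, `X` is bounded with
`ρ ↦ N (ρ/(4Λ²))` and `ρ ↦ max (R (ρ/(4Λ²))) (2Λλ/ρ)`, the latter raised to at least `1`.
If the image of `f` is `c`-cobounded, picking `g y` with `f (g y)` within `c` of `y` gives a
quasi-isometric map `g : Y → X`, and the same argument transfers the property back.
-/

open Metric Set ENNReal

/-- A map between metric spaces is quasi-isometric if it is `(Λ,λ)`-quasi-isometric for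
some `Λ ≥ 1`, `λ ≥ 0`. -/
def QuasiIsometricMap {X Y : Type*} [MetricSpace X] [MetricSpace Y] (f : X → Y) : Prop :=
  ∃ Λ lam : ℝ, 1 ≤ Λ ∧ 0 ≤ lam ∧ ∀ x x' : X,
    dist x x' / Λ - lam ≤ dist (f x) (f x') ∧ dist (f x) (f x') ≤ Λ * dist x x' + lam

def IsQuasiIsometricWith {X Y : Type*} [MetricSpace X] [MetricSpace Y]
    (Λ lam : ℝ) (f : X → Y) : Prop :=
  ∀ x x' : X, dist x x' / Λ - lam ≤ dist (f x) (f x') ∧ dist (f x) (f x') ≤ Λ * dist x x' + lam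

namespace IsQuasiIsometricWith

variable {X Y : Type*} [MetricSpace X] [MetricSpace Y] {Λ lam : ℝ} {f : X → Y}

lemma dist_map_le (hf : IsQuasiIsometricWith Λ lam f) (x x' : X) :
    dist (f x) (f x') ≤ Λ * dist x x' + lam :=
  (hf x x').2

lemma dist_le (hf : IsQuasiIsometricWith Λ lam f) (hΛ : 0 < Λ) (x x' : X) :
    dist x x' ≤ Λ * (dist (f x) (f x') + lam) := by
  have h := (hf x x').1
  rw [sub_le_iff_le_add, div_le_iff₀ hΛ] at h
  linarith

lemma mapsTo_closedBall (hf : IsQuasiIsometricWith Λ lam f) (hΛ : 0 ≤ Λ) {r : ℝ}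
    (hlam : lam ≤ Λ * r) (a : X) : MapsTo f (closedBall a r) (closedBall (f a) (2 * Λ * r)) :=
  fun x hx => mem_closedBall.mpr <| by
    linarith [hf.dist_map_le x a, mul_le_mul_of_nonneg_left (mem_closedBall.mp hx) hΛ]

lemma div_two_mul_le_dist_map (hf : IsQuasiIsometricWith Λ lam f) (hΛ : 0 < Λ) {s : ℝ}
    (hs : 2 * Λ * lam ≤ s) {x x' : X} (hxx' : s ≤ dist x x') :
    s / (2 * Λ) ≤ dist (f x) (f x') := by
  have hlam : lam ≤ s / (2 * Λ) := by rw [le_div_iff₀ (by positivity)]; linarith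
  calc s / (2 * Λ) = s / Λ - s / (2 * Λ) := by field_simp; ring
    _ ≤ dist x x' / Λ - lam := by gcongr
    _ ≤ dist (f x) (f x') := (hf x x').1

lemma coarseRightInverse (hf : IsQuasiIsometricWith Λ lam f) (hΛ : 1 ≤ Λ) (hlam : 0 ≤ lam)
    {c : ℝ} (hc : 0 ≤ c) {g : Y → X} (hg : ∀ y, dist y (f (g y)) ≤ c) :
    IsQuasiIsometricWith Λ (Λ * (2 * c + lam)) g := by
  intro y y'
  have hΛ0 : 0 < Λ := by linarith
  have hclose : |dist (f (g y)) (f (g y')) - dist y y'| ≤ 2 * c := by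
    have h := dist_dist_dist_le (f (g y)) (f (g y')) y y'
    rw [Real.dist_eq] at h
    linarith [hg y, hg y', dist_comm y (f (g y)), dist_comm y' (f (g y'))]
  constructor
  · have hΛsq : 2 * c + lam ≤ Λ * (Λ * (2 * c + lam)) := by
      rw [← mul_assoc]; exact le_mul_of_one_le_left (by positivity) (by nlinarith)
    rw [sub_le_iff_le_add, div_le_iff₀ hΛ0]
    linarith [(abs_sub_le_iff.mp hclose).2, hf.dist_map_le (g y) (g y')]
  · calc dist (g y) (g y') ≤ Λ * (dist (f (g y)) (f (g y')) + lam) := hf.dist_le hΛ0 _ _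
      _ ≤ Λ * (dist y y' + 2 * c + lam) := by gcongr; linarith [(abs_sub_le_iff.mp hclose).1]
      _ = Λ * dist y y' + Λ * (2 * c + lam) := by ring

end IsQuasiIsometricWith

lemma IsUBG.of_isQuasiIsometricWith {X Y : Type*} [MetricSpace X] [MetricSpace Y]
    {Λ lam : ℝ} {f : X → Y} (hf : IsQuasiIsometricWith Λ lam f) (hΛ : 1 ≤ Λ)
    (hY : IsUBG Y) : IsUBG X := by
  classical
  obtain ⟨N, R, -, hNR⟩ := hY
  have hΛ0 : 0 < Λ := by linarith
  refine ⟨fun ρ => N (ρ / (4 * Λ ^ 2)),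
    fun ρ => max (max (R (ρ / (4 * Λ ^ 2))) (2 * Λ * lam / ρ)) 1,
    fun ρ => zero_le_one.trans (le_max_right _ _), ?_⟩
  intro ρ hρ0 hρ1 r hr a _ S hS hpair
  simp only [max_le_iff] at hr
  obtain ⟨⟨hrR, hrlam⟩, hr1⟩ := hr
  rw [div_le_iff₀ hρ0] at hrlam
  have hscale : ρ / (4 * Λ ^ 2) * (2 * Λ * r) = ρ * r / (2 * Λ) := by field_simp; ring
  set ρ' := ρ / (4 * Λ ^ 2)
  have hsep : ∀ x ∈ S, ∀ x' ∈ S, x ≠ x' → ρ' * (2 * Λ * r) ≤ dist (f x) (f x') :=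
    fun x hx x' hx' hne => hscale ▸
      hf.div_two_mul_le_dist_map hΛ0 (by linarith) (hpair hx hx' hne)
  have hinj : InjOn f S := by
    intro x hx x' hx' hfx
    by_contra hne
    have := hsep x hx x' hx' hne
    rw [hfx, dist_self] at this
    exact this.not_gt (by positivity)
  have hlamr : lam ≤ Λ * r :=
    calc lam ≤ r * ρ / (2 * Λ) := by rw [le_div_iff₀ (by positivity)]; linarith
      _ ≤ r := div_le_of_le_mul₀ (by positivity) (by positivity) (by nlinarith)
      _ ≤ Λ * r := le_mul_of_one_le_left (by positivity) hΛ
  rw [← Finset.card_image_of_injOn hinj]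
  refine hNR ρ' (by positivity) ?_ (2 * Λ * r) (by nlinarith) (f a) trivial _ ?_ ?_
  · rw [div_lt_one (by positivity)]; nlinarith
  · rw [Finset.coe_image]
    rintro _ ⟨x, hx, rfl⟩
    exact ⟨trivial, hf.mapsTo_closedBall hΛ0.le hlamr a (hS hx).2⟩
  · rw [Finset.coe_image]
    rintro _ ⟨x, hx, rfl⟩ _ ⟨x', hx', rfl⟩ hne
    exact hsep x hx x' hx' fun h => hne (h ▸ rfl)

/-- Corollary 2.4: having uniformly bounded growth rate is a quasi-isometry invariant.
If `f : X → Y` is quasi-isometric and `Y` is UBG, then `X` is UBG; and if moreover the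
image of `f` is cobounded in `Y`, then `X` is UBG iff `Y` is UBG. -/
theorem isUBG_quasiIsometry_invariant {X Y : Type*} [MetricSpace X] [MetricSpace Y]
    (f : X → Y) (hf : QuasiIsometricMap f) :
    (IsUBG Y → IsUBG X) ∧
    ((∃ lam : ℝ, 0 ≤ lam ∧ ∀ y : Y, ∃ x : X, dist y (f x) ≤ lam) →
      (IsUBG X ↔ IsUBG Y)) := by
  obtain ⟨Λ, lam, hΛ, hlam, hqi : IsQuasiIsometricWith Λ lam f⟩ := hf
  have pullback : IsUBG Y → IsUBG X := IsUBG.of_isQuasiIsometricWith hqi hΛ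
  refine ⟨pullback, fun ⟨c, hc, hcobounded⟩ => ⟨fun hX => ?_, pullback⟩⟩
  choose g hg using hcobounded
  exact IsUBG.of_isQuasiIsometricWith (hqi.coarseRightInverse hΛ hlam hc hg) hΛ hX
end

section
/- Every UBG-space has polynomial growth rate. Precisely: let Y be a metric space that is (N,R)-bounded, fix ρ ∈ (1/2,1), and set k = ln N(ρ)/ln(1/ρ). Then for every δ > 0 with ((2ρ−1)/ρ)·δ ≥ R(ρ), every ball of radius r ≥ δ in Y contains at most d·r^k points that are pairwise at distance ≥ δ, where d = (ρδ)^{−k}. -/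
open Metric Set ENNReal

/-!
A ball of radius `r` is split into at most `N ρ` balls of radius `ρ r`, centred at a maximal
`ρ r`-separated subset of its points; this is repeated until `ρ r ≤ δ`, when a `δ`-separated
set is itself `ρ r`-separated and so has at most `N ρ` points. With `k = logb (1/ρ) (N ρ)`
every splitting multiplies the count by `N ρ = (1/ρ)^k` while shrinking the radius by the
factor `ρ`, so the bound `(r / (ρ δ))^k` propagates from radius `ρ r` to radius `r`.
-/

theorem Finset.exists_subset_separated_cover {X : Type*} [PseudoMetricSpace X] (S : Finset X)
    {ε : ℝ} (hε : 0 ≤ ε) :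
    ∃ T ⊆ S, (T : Set X).Pairwise (fun p q => ε < dist p q) ∧ ∀ x ∈ S, ∃ t ∈ T, dist x t ≤ ε := by
  obtain ⟨T, -, hT⟩ := (S.finite_toSet.finite_subsets.inter_of_left
    {T | IsSeparated ε.toNNReal T}).exists_le_maximal ⟨Set.empty_subset (S : Set X), .empty⟩
  lift T to Finset X using S.finite_toSet.subset hT.prop.1
  refine ⟨T, Finset.coe_subset.1 hT.prop.1, fun p hp q hq hpq => ?_, fun x hx => ?_⟩
  · have : ENNReal.ofReal ε < ENNReal.ofReal (dist p q) := edist_dist p q ▸ hT.prop.2 hp hq hpq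
    exact (ENNReal.ofReal_lt_ofReal_iff_of_nonneg hε).1 this
  · simpa [Real.coe_toNNReal _ hε] using
      (IsCover.of_maximal_isSeparated hT).subset_iUnion_closedBall hx

theorem Real.natCast_mul_rpow_logb_le {b x : ℝ} (hb : 0 < b) (hb1 : b ≠ 1) (hx : 0 ≤ x) (n : ℕ) :
    (n : ℝ) * x ^ logb b n ≤ (b * x) ^ logb b n := by
  rcases n.eq_zero_or_pos with rfl | hn
  · simp
  · rw [mul_rpow hb.le hx, rpow_logb hb hb1 (by positivity)]

theorem Real.natCast_le_rpow_logb {b x : ℝ} (hb : 1 < b) (hx : 1 ≤ x) (n : ℕ) :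
    (n : ℝ) ≤ (b * x) ^ logb b n := calc
  (n : ℝ) = n * 1 ^ logb b n := by rw [one_rpow, mul_one]
  _ ≤ (b * 1) ^ logb b n := natCast_mul_rpow_logb_le (by positivity) hb.ne' zero_le_one n
  _ ≤ (b * x) ^ logb b n := by
    gcongr
    rcases n.eq_zero_or_pos with rfl | hn
    · simp
    · exact logb_nonneg hb (by exact_mod_cast hn)

namespace IsNRBounded

variable {Y : Type*} [MetricSpace Y] {N : ℝ → ℕ} {R : ℝ → ℝ} {ρ δ r : ℝ} {c : Y} {S : Finset Y}

theorem card_le (hY : IsNRBounded Y N R) (hρ0 : 0 < ρ) (hρ1 : ρ < 1) (hr : R ρ ≤ r)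
    (hS : (S : Set Y) ⊆ closedBall c r)
    (hsep : (S : Set Y).Pairwise fun p q => ρ * r ≤ dist p q) : S.card ≤ N ρ :=
  hY ρ hρ0 hρ1 r hr c (mem_univ c) S (fun _ hx => ⟨mem_univ _, hS hx⟩) hsep

theorem card_le_mul (hY : IsNRBounded Y N R) (hρ0 : 0 < ρ) (hρ1 : ρ < 1) (hr : R ρ ≤ r)
    (hr0 : 0 ≤ r) (hS : (S : Set Y) ⊆ closedBall c r) {B : ℝ}
    (hB : ∀ t (U : Finset Y), U ⊆ S → (U : Set Y) ⊆ closedBall t (ρ * r) → (U.card : ℝ) ≤ B) :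
    (S.card : ℝ) ≤ N ρ * B := by
  classical
  obtain ⟨T, hTS, hTsep, hTcov⟩ := S.exists_subset_separated_cover (by positivity : 0 ≤ ρ * r)
  have hT : T.card ≤ N ρ := hY.card_le hρ0 hρ1 hr ((Finset.coe_subset.2 hTS).trans hS)
    (hTsep.mono' fun _ _ => le_of_lt)
  let piece := fun t => S.filter fun x => dist x t ≤ ρ * r
  have hcover : S ⊆ T.biUnion piece := fun x hx => by
    obtain ⟨t, ht, hxt⟩ := hTcov x hx
    exact Finset.mem_biUnion.2 ⟨t, ht, Finset.mem_filter.2 ⟨hx, hxt⟩⟩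
  have hB0 : 0 ≤ B := by simpa using hB c ∅ (Finset.empty_subset S) (by simp)
  calc (S.card : ℝ) ≤ ∑ t ∈ T, ((piece t).card : ℝ) := by
        exact_mod_cast (Finset.card_le_card hcover).trans Finset.card_biUnion_le
    _ ≤ ∑ _t ∈ T, B := Finset.sum_le_sum fun t _ =>
        hB t _ (Finset.filter_subset _ _) fun x hx => (Finset.mem_filter.1 hx).2
    _ = T.card * B := by rw [Finset.sum_const, nsmul_eq_mul]
    _ ≤ N ρ * B := by gcongr

theorem card_le_rpow_of_mul_le (hY : IsNRBounded Y N R) (hρ0 : 0 < ρ) (hρ1 : ρ < 1)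
    (hRδ : R ρ ≤ δ) (hδ : 0 < δ) (hδr : δ ≤ r) (hρr : ρ * r ≤ δ)
    (hS : (S : Set Y) ⊆ closedBall c r) (hsep : (S : Set Y).Pairwise fun p q => δ ≤ dist p q) :
    (S.card : ℝ) ≤ (1 / ρ * (r / δ)) ^ Real.logb (1 / ρ) (N ρ) :=
  calc (S.card : ℝ) ≤ N ρ := by
        exact_mod_cast hY.card_le hρ0 hρ1 (hRδ.trans hδr) hS (hsep.mono' fun _ _ => hρr.trans)
    _ ≤ _ := Real.natCast_le_rpow_logb (one_lt_one_div hρ0 hρ1) ((one_le_div hδ).2 hδr) _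

theorem card_le_rpow_of_pow_mul_le (hY : IsNRBounded Y N R) (hρ0 : 0 < ρ) (hρ1 : ρ < 1)
    (hRδ : R ρ ≤ δ) (hδ : 0 < δ) (n : ℕ) (hδr : δ ≤ r) (hn : ρ ^ n * r ≤ δ)
    (hS : (S : Set Y) ⊆ closedBall c r) (hsep : (S : Set Y).Pairwise fun p q => δ ≤ dist p q) :
    (S.card : ℝ) ≤ (1 / ρ * (r / δ)) ^ Real.logb (1 / ρ) (N ρ) := by
  induction n generalizing r c S with
  | zero =>
    refine hY.card_le_rpow_of_mul_le hρ0 hρ1 hRδ hδ hδr ?_ hS hsep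
    rw [pow_zero, one_mul] at hn
    nlinarith
  | succ m ih =>
    by_cases hρr : ρ * r ≤ δ
    · exact hY.card_le_rpow_of_mul_le hρ0 hρ1 hRδ hδ hδr hρr hS hsep
    have hB : ∀ t (U : Finset Y), U ⊆ S → (U : Set Y) ⊆ closedBall t (ρ * r) →
        (U.card : ℝ) ≤ (1 / ρ * (ρ * r / δ)) ^ Real.logb (1 / ρ) (N ρ) := fun t U hUS hU =>
      ih (not_le.1 hρr).le (by rwa [pow_succ, mul_assoc] at hn) hU (hsep.mono hUS)
    calc (S.card : ℝ) ≤ N ρ * (1 / ρ * (ρ * r / δ)) ^ Real.logb (1 / ρ) (N ρ) :=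
          hY.card_le_mul hρ0 hρ1 (hRδ.trans hδr) (hδ.le.trans hδr) hS hB
      _ = N ρ * (r / δ) ^ Real.logb (1 / ρ) (N ρ) := by field_simp
      _ ≤ _ := Real.natCast_mul_rpow_logb_le (by positivity) (one_lt_one_div hρ0 hρ1).ne'
          (div_nonneg (hδ.le.trans hδr) hδ.le) _

end IsNRBounded

theorem isUBG_polynomial_growth_general {Y : Type*} [MetricSpace Y] (N : ℝ → ℕ) (R : ℝ → ℝ)
    (hY : IsNRBounded Y N R) (ρ : ℝ) (hρ1 : 1 / 2 < ρ) (hρ2 : ρ < 1)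
    (δ : ℝ) (hδ : 0 < δ) (hδR : R ρ ≤ (2 * ρ - 1) / ρ * δ) :
    ∀ r : ℝ, δ ≤ r → ∀ (c : Y) (S : Finset Y), (S : Set Y) ⊆ Metric.closedBall c r →
      ((S : Set Y).Pairwise fun p q => δ ≤ dist p q) →
      (S.card : ℝ) ≤ (ρ * δ) ^ (-(Real.log (N ρ) / Real.log (1 / ρ))) *
        r ^ (Real.log (N ρ) / Real.log (1 / ρ)) := by
  intro r hδr c S hS hsep
  have hρ0 : 0 < ρ := by linarith
  have hr0 : 0 < r := hδ.trans_le hδr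
  have hRδ : R ρ ≤ δ := hδR.trans <| by
    rw [div_mul_eq_mul_div, div_le_iff₀ hρ0]
    nlinarith
  obtain ⟨n, hn⟩ := exists_pow_lt_of_lt_one (div_pos hδ hr0) hρ2
  have hnr : ρ ^ n * r ≤ δ := ((lt_div_iff₀ hr0).1 hn).le
  calc (S.card : ℝ) ≤ (1 / ρ * (r / δ)) ^ Real.logb (1 / ρ) (N ρ) :=
        hY.card_le_rpow_of_pow_mul_le hρ0 hρ2 hRδ hδ n hδr hnr hS hsep
    _ = _ := by
      rw [Real.logb, one_div_mul_eq_div, div_div, Real.div_rpow hr0.le (by positivity),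
        Real.rpow_neg (by positivity), div_eq_inv_mul, mul_comm δ]

/-- Lemma 2.5: every UBG space has polynomial growth rate.  If `Y` is `(N,R)`-bounded,
`ρ ∈ (1/2,1)`, `k = ln N(ρ)/ln(1/ρ)`, and `δ > 0` satisfies `((2ρ-1)/ρ)·δ ≥ R ρ`, then
every ball of radius `r ≥ δ` in `Y` contains at most `(ρδ)^{-k}·r^k` points which are
pairwise at distance `≥ δ`. -/
theorem isUBG_polynomial_growth {Y : Type*} [MetricSpace Y] (N : ℝ → ℕ) (R : ℝ → ℝ)
    (hR : ∀ ρ, 0 ≤ R ρ) (hY : IsNRBounded Y N R) (ρ : ℝ) (hρ1 : 1 / 2 < ρ) (hρ2 : ρ < 1)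
    (δ : ℝ) (hδ : 0 < δ) (hδR : R ρ ≤ (2 * ρ - 1) / ρ * δ) :
    ∀ r : ℝ, δ ≤ r → ∀ (c : Y) (S : Finset Y), (S : Set Y) ⊆ Metric.closedBall c r →
      ((S : Set Y).Pairwise fun p q => δ ≤ dist p q) →
      (S.card : ℝ) ≤ (ρ * δ) ^ (-(Real.log (N ρ) / Real.log (1 / ρ))) *
        r ^ (Real.log (N ρ) / Real.log (1 / ρ)) :=
  isUBG_polynomial_growth_general N R hY ρ hρ1 hρ2 δ hδ hδR
end

section
/- If X and Y are UBG metric spaces, then the metric product Z = X × Y (with the product metric d((x,y),(x',y'))² = d(x,x')² + d(y,y')²) is an UBG-space. -/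
open Metric Set ENNReal

lemma prodL2_dist_sq {X Y : Type*} [MetricSpace X] [MetricSpace Y] (f g : WithLp 2 (X × Y)) :
    dist f g ^ 2 = dist f.fst g.fst ^ 2 + dist f.snd g.snd ^ 2 := by
  rw [WithLp.prod_dist_eq_add (by norm_num : (0:ℝ) < (2:ℝ≥0∞).toReal)]
  have h2 : ((2:ℝ≥0∞)).toReal = 2 := by norm_num
  rw [h2]
  rw [← Real.rpow_natCast (_ ^ (1/2:ℝ)) 2, ← Real.rpow_mul (by positivity)]
  norm_num

lemma prodL2_dist_fst_le {X Y : Type*} [MetricSpace X] [MetricSpace Y] (f g : WithLp 2 (X × Y)) :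
    dist f.fst g.fst ≤ dist f g := by
  have h := prodL2_dist_sq f g
  nlinarith [dist_nonneg (x := f) (y := g), dist_nonneg (x := f.fst) (y := g.fst),
    sq_nonneg (dist f.snd g.snd)]

lemma prodL2_dist_snd_le {X Y : Type*} [MetricSpace X] [MetricSpace Y] (f g : WithLp 2 (X × Y)) :
    dist f.snd g.snd ≤ dist f g := by
  have h := prodL2_dist_sq f g
  nlinarith [dist_nonneg (x := f) (y := g), dist_nonneg (x := f.snd) (y := g.snd),
    sq_nonneg (dist f.fst g.fst)]


/-- Lemma 2.7: the metric product (with the ℓ²-product metric) of two UBG-spaces is an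
UBG-space. -/
theorem isUBG_prod {X Y : Type*} [MetricSpace X] [MetricSpace Y]
    (hX : IsUBG X) (hY : IsUBG Y) : IsUBG (WithLp 2 (X × Y)) := by
  classical
  obtain ⟨NX, RX, hRX0, hNX⟩ := hX
  obtain ⟨NY, RY, hRY0, hNY⟩ := hY
  refine ⟨fun ρ => NX (ρ/4) * NY (ρ/4), fun ρ => max (RX (ρ/4)) (RY (ρ/4)),
    fun ρ => le_trans (hRX0 _) (le_max_left _ _), ?_⟩
  intro ρ hρ0 hρ1 r hr a _ S hS hsep
  set ρ' := ρ / 4 with hρ'def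
  have hρ'0 : 0 < ρ' := by positivity
  have hρ'1 : ρ' < 1 := by linarith
  have hrX : RX ρ' ≤ r := le_trans (le_max_left _ _) hr
  have hrY : RY ρ' ≤ r := le_trans (le_max_right _ _) hr
  have hr0 : 0 ≤ r := le_trans (hRX0 _) hrX
  -- if r = 0, the ball is a single point
  rcases eq_or_lt_of_le hr0 with hr0' | hrpos
  · have hSsub : S ⊆ ({a} : Finset (WithLp 2 (X × Y))) := by
      intro s hs
      have := (hS (Finset.mem_coe.mpr hs)).2
      simp only [Finset.mem_singleton]
      have : dist s a ≤ r := mem_closedBall.mp this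
      have : dist s a = 0 := le_antisymm (by linarith [hr0'.symm ▸ this]) dist_nonneg
      exact dist_eq_zero.mp this
    have h1 : S.card ≤ 1 := le_trans (Finset.card_le_card hSsub) (by simp)
    have hNX1 : 1 ≤ NX ρ' := by
      have := hNX ρ' hρ'0 hρ'1 r hrX a.fst (mem_univ _) {a.fst}
        (by intro x hx; simp only [Finset.coe_singleton, mem_singleton_iff] at hx
            subst hx; exact ⟨mem_univ _, by simpa using hr0⟩)
        (by simp)
      simpa using this
    have hNY1 : 1 ≤ NY ρ' := by
      have := hNY ρ' hρ'0 hρ'1 r hrY a.snd (mem_univ _) {a.snd}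
        (by intro x hx; simp only [Finset.coe_singleton, mem_singleton_iff] at hx
            subst hx; exact ⟨mem_univ _, by simpa using hr0⟩)
        (by simp)
      simpa using this
    exact le_trans h1 (Nat.one_le_iff_ne_zero.mpr (Nat.mul_ne_zero
      (Nat.one_le_iff_ne_zero.mp hNX1) (Nat.one_le_iff_ne_zero.mp hNY1)))
  have hρr : 0 < ρ' * r := mul_pos hρ'0 hrpos
  -- choose a maximal subset of S whose first coordinates are ρ'r-separated
  set Ps := S.powerset.filter
    (fun P : Finset (WithLp 2 (X × Y)) => (P : Set (WithLp 2 (X × Y))).Pairwise fun s t => ρ' * r ≤ dist s.fst t.fst) with hPs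
  have hempty : ∅ ∈ Ps := by simp [hPs]
  obtain ⟨P, hPmem, hPmax⟩ : ∃ m ∈ Ps, ∀ x ∈ Ps, ¬m < x := by
    obtain ⟨m, hm⟩ := Finset.exists_maximal (s := Ps) ⟨∅, hempty⟩
    exact ⟨m, hm.1, fun x hx hlt => lt_irrefl _ (lt_of_lt_of_le hlt (hm.2 hx hlt.le))⟩
  rw [hPs, Finset.mem_filter, Finset.mem_powerset] at hPmem
  obtain ⟨hPS, hPsep⟩ := hPmem
  have hsymm : Symmetric fun s t : WithLp 2 (X × Y) => ρ' * r ≤ dist s.fst t.fst := by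
    intro s t h
    exact le_of_le_of_eq h (dist_comm _ _)
  -- every point of S is close (in the first coordinate) to a point of P
  have hclose : ∀ s : WithLp 2 (X × Y), ∃ p,
      s ∈ S → p ∈ P ∧ dist s.fst p.fst < ρ' * r := by
    intro s
    by_cases hs : s ∈ S
    · by_contra hcon
      push_neg at hcon
      have hfar : ∀ p ∈ P, ρ' * r ≤ dist s.fst p.fst := fun p hp => (hcon p).2 hp
      have hsP : s ∉ P := by
        intro hsP
        have := hfar s hsP
        simp at this
        linarith
      have hins : insert s P ∈ Ps := by
        rw [hPs, Finset.mem_filter, Finset.mem_powerset]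
        refine ⟨Finset.insert_subset hs hPS, ?_⟩
        rw [Finset.coe_insert]
        haveI : Std.Symm (fun s t : WithLp 2 (X × Y) => ρ' * r ≤ dist s.fst t.fst) :=
          ⟨fun _ _ h => hsymm h⟩
        exact (Set.pairwise_insert_of_symm).mpr
          ⟨hPsep, fun p hp _ => hfar p hp⟩
      exact hPmax _ hins (Finset.ssubset_insert hsP)
    · exact ⟨s, fun h => absurd h hs⟩
  choose g hg using hclose
  -- P has at most NX ρ' elements
  have hPfst_inj : Set.InjOn (fun s : WithLp 2 (X × Y) => s.fst) (↑P) := by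
    intro p hp q hq hpq
    by_contra hne
    have h1 := hPsep hp hq hne
    simp only at hpq h1
    rw [hpq] at h1
    simp at h1
    linarith
  have hPcard : P.card ≤ NX ρ' := by
    have himg := hNX ρ' hρ'0 hρ'1 r hrX a.fst (mem_univ _)
      (P.image (fun s => s.fst)) ?_ ?_
    · rwa [Finset.card_image_of_injOn hPfst_inj] at himg
    · intro x hx
      rw [Finset.coe_image] at hx
      obtain ⟨p, hp, rfl⟩ := hx
      refine ⟨mem_univ _, ?_⟩
      have hpS := hS (Finset.mem_coe.mpr (hPS (Finset.mem_coe.mp hp)))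
      exact mem_closedBall.mpr (le_trans (prodL2_dist_fst_le p a)
        (mem_closedBall.mp hpS.2))
    · rw [Finset.coe_image]
      intro x hx y hy hxy
      obtain ⟨p, hp, rfl⟩ := hx
      obtain ⟨q, hq, rfl⟩ := hy
      exact hPsep hp hq (fun h => hxy (by rw [h]))
  -- each fiber has at most NY ρ' elements
  have hfiber : ∀ p ∈ P, (S.filter fun s => g s = p).card ≤ NY ρ' := by
    intro p hp
    set F := S.filter fun s => g s = p with hF
    have hkey : ∀ s ∈ F, ∀ t ∈ F, s ≠ t → ρ' * r ≤ dist s.snd t.snd := by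
      intro s hs t ht hst
      rw [hF, Finset.mem_filter] at hs ht
      obtain ⟨hsS, hsg⟩ := hs
      obtain ⟨htS, htg⟩ := ht
      have h1 := (hg s hsS).2
      have h2 := (hg t htS).2
      rw [hsg] at h1
      rw [htg] at h2
      have hdx : dist s.fst t.fst < 2 * (ρ' * r) := by
        calc dist s.fst t.fst ≤ dist s.fst p.fst + dist p.fst t.fst := dist_triangle _ _ _
          _ = dist s.fst p.fst + dist t.fst p.fst := by rw [dist_comm p.fst]
          _ < 2 * (ρ' * r) := by linarith
      have hd : ρ * r ≤ dist s t := hsep (Finset.mem_coe.mpr hsS)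
        (Finset.mem_coe.mpr htS) hst
      have hsq := prodL2_dist_sq s t
      have hdx0 : (0:ℝ) ≤ dist s.fst t.fst := dist_nonneg
      have hdy0 : (0:ℝ) ≤ dist s.snd t.snd := dist_nonneg
      have hd0 : (0:ℝ) ≤ dist s t := dist_nonneg
      rw [hρ'def] at *
      nlinarith [sq_nonneg (dist s.snd t.snd - ρ/4 * r), mul_pos hρ0 hrpos]
    have hsnd_inj : Set.InjOn (fun s : WithLp 2 (X × Y) => s.snd) (↑F) := by
      intro s hs t ht hst
      by_contra hne
      have h1 := hkey s (Finset.mem_coe.mp hs) t (Finset.mem_coe.mp ht) hne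
      simp only at hst h1
      rw [hst] at h1
      simp at h1
      linarith
    have himg := hNY ρ' hρ'0 hρ'1 r hrY a.snd (mem_univ _)
      (F.image (fun s => s.snd)) ?_ ?_
    · rwa [Finset.card_image_of_injOn hsnd_inj] at himg
    · intro y hy
      rw [Finset.coe_image] at hy
      obtain ⟨s, hsF, rfl⟩ := hy
      have hsS : s ∈ S := Finset.mem_of_mem_filter _ (Finset.mem_coe.mp hsF)
      refine ⟨mem_univ _, ?_⟩
      exact mem_closedBall.mpr (le_trans (prodL2_dist_snd_le s a)
        (mem_closedBall.mp (hS (Finset.mem_coe.mpr hsS)).2))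
    · rw [Finset.coe_image]
      intro y hy z hz hyz
      obtain ⟨s, hs, rfl⟩ := hy
      obtain ⟨t, ht, rfl⟩ := hz
      exact hkey s (Finset.mem_coe.mp hs) t (Finset.mem_coe.mp ht)
        (fun h => hyz (by rw [h]))
  -- combine
  have hcount : S.card = ∑ p ∈ P, (S.filter fun s => g s = p).card :=
    Finset.card_eq_sum_card_fiberwise (fun s hs => (hg s hs).1)
  calc S.card = ∑ p ∈ P, (S.filter fun s => g s = p).card := hcount
    _ ≤ ∑ _p ∈ P, NY ρ' := Finset.sum_le_sum hfiber
    _ = P.card * NY ρ' := by rw [Finset.sum_const, smul_eq_mul]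
    _ ≤ NX ρ' * NY ρ' := Nat.mul_le_mul_right _ hPcard
end

section
/- For every n ≥ 0, the hyperbolic dimension of Euclidean space is zero: hypdim ℝⁿ = 0. -/
open Metric Set ENNReal

/-- A subset is `N`-bounded if it is `(N,R)`-bounded for some `R ∈ ℛ`. -/
def SubsetNBounded {X : Type*} [MetricSpace X] (A : Set X) (N : ℝ → ℕ) : Prop :=
  ∃ R : ℝ → ℝ, (∀ ρ, 0 ≤ R ρ) ∧ SubsetNRBounded A N R

/-- A covering `𝒰` is uniformly `N`-bounded: all its elements are `(N,R)`-bounded for one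
common `R ∈ ℛ`, and every finite union of its elements is `N`-bounded. -/
def UniformlyNBounded {X : Type*} [MetricSpace X] (𝒰 : Set (Set X)) (N : ℝ → ℕ) : Prop :=
  (∃ R : ℝ → ℝ, (∀ ρ, 0 ≤ R ρ) ∧ ∀ U ∈ 𝒰, SubsetNRBounded U N R) ∧
  ∀ F : Finset (Set X), ↑F ⊆ 𝒰 → SubsetNBounded (⋃₀ (F : Set (Set X))) N

/-- The Lebesgue number of a covering: `L(𝒰) = inf_x sup_{U ∈ 𝒰} dist (x, X∖U)`. -/
noncomputable def LebesgueNumber {X : Type*} [MetricSpace X] (𝒰 : Set (Set X)) : ℝ≥0∞ :=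
  ⨅ x : X, ⨆ U ∈ 𝒰, EMetric.infEdist x Uᶜ

/-- The multiplicity of a covering is `≤ m`: every point belongs to at most `m` of its
elements. -/
def MultiplicityLE {X : Type*} [MetricSpace X] (𝒰 : Set (Set X)) (m : ℕ) : Prop :=
  ∀ x : X, ∀ F : Finset (Set X), ↑F ⊆ 𝒰 → (∀ U ∈ F, x ∈ U) → F.card ≤ m

/-- `HypdimLE X n`: for every `d > 0` there are `N ∈ 𝒩` and a covering of `X` with
Lebesgue number `≥ d` and multiplicity `≤ n+1` which is uniformly `N`-bounded. -/
def HypdimLE (X : Type*) [MetricSpace X] (n : ℕ) : Prop :=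
  ∀ d : ℝ, 0 < d → ∃ N : ℝ → ℕ, ∃ 𝒰 : Set (Set X),
    ⋃₀ 𝒰 = Set.univ ∧ UniformlyNBounded 𝒰 N ∧
    ENNReal.ofReal d ≤ LebesgueNumber 𝒰 ∧ MultiplicityLE 𝒰 (n + 1)

/-- The hyperbolic dimension of a metric space. -/
noncomputable def hypdim (X : Type*) [MetricSpace X] : ℕ∞ :=
  sInf {k : ℕ∞ | ∃ n : ℕ, k = n ∧ HypdimLE X n}


/-- Uniform packing bound in the unit ball of Euclidean space. -/
lemma euclidean_pack (n : ℕ) (ρ : ℝ) :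
    ∃ m : ℕ, 1 ≤ m ∧ (0 < ρ → ∀ S : Finset (EuclideanSpace ℝ (Fin n)),
      (S : Set (EuclideanSpace ℝ (Fin n))) ⊆ closedBall 0 1 →
      ((S : Set (EuclideanSpace ℝ (Fin n))).Pairwise fun p q => ρ ≤ dist p q) →
      S.card ≤ m) := by
  set E := EuclideanSpace ℝ (Fin n)
  by_cases hρ : 0 < ρ
  · have htb := (isCompact_closedBall (0 : E) 1).totallyBounded
    rw [totallyBounded_iff] at htb
    obtain ⟨t, htfin, htcov⟩ := htb (ρ/3) (by linarith)
    refine ⟨htfin.toFinset.card + 1, le_add_self, fun _ S hS hpair => ?_⟩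
    have : S.card ≤ htfin.toFinset.card := by
      classical
      apply Finset.card_le_card_of_injOn
        (fun x => if h : ∃ c ∈ t, x ∈ ball c (ρ/3) then h.choose else x)
      · intro x hx
        have hx' : x ∈ ⋃ y ∈ t, ball y (ρ/3) := htcov (hS hx)
        simp only [mem_iUnion] at hx'
        obtain ⟨c, hc, hxc⟩ := hx'
        have h : ∃ c ∈ t, x ∈ ball c (ρ/3) := ⟨c, hc, hxc⟩
        simp only [dif_pos h, htfin.mem_toFinset]
        exact Finset.mem_coe.mpr (htfin.mem_toFinset.mpr h.choose_spec.1)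
      · intro x hx y hy hxy
        by_contra hne
        have hρxy := hpair (by exact_mod_cast hx) (by exact_mod_cast hy) hne
        have hx' : ∃ c ∈ t, x ∈ ball c (ρ/3) := by
          have := htcov (hS hx); simp only [mem_iUnion] at this
          obtain ⟨c, hc, h⟩ := this; exact ⟨c, hc, h⟩
        have hy' : ∃ c ∈ t, y ∈ ball c (ρ/3) := by
          have := htcov (hS hy); simp only [mem_iUnion] at this
          obtain ⟨c, hc, h⟩ := this; exact ⟨c, hc, h⟩
        simp only [dif_pos hx', dif_pos hy'] at hxy
        have d1 : dist x hx'.choose < ρ/3 := hx'.choose_spec.2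
        have d2 : dist y hy'.choose < ρ/3 := hy'.choose_spec.2
        have : dist x y < ρ := by
          calc dist x y ≤ dist x hx'.choose + dist hx'.choose y := dist_triangle _ _ _
            _ = dist x hx'.choose + dist y hy'.choose := by rw [hxy, dist_comm hy'.choose y]
            _ < ρ := by linarith
        linarith
    omega
  · exact ⟨1, le_refl 1, fun h => absurd h hρ⟩

lemma euclidean_subsetNRBounded (n : ℕ) :
    ∃ N : ℝ → ℕ, ∀ A : Set (EuclideanSpace ℝ (Fin n)),
      SubsetNRBounded A N (fun _ => 0) := by
  classical
  choose N hN using euclidean_pack n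
  refine ⟨N, fun A ρ hρ0 hρ1 r hr a _ S hS hpair => ?_⟩
  rcases eq_or_lt_of_le hr with hr0 | hr0
  · -- r = 0 : S ⊆ {a}
    have hone : S.card ≤ 1 := by
      refine Finset.card_le_one.mpr fun x hx y hy => ?_
      have hx' := (hS hx).2
      have hy' := (hS hy).2
      rw [← hr0, Metric.mem_closedBall, dist_le_zero] at hx' hy'
      rw [hx', hy']
    exact le_trans hone (hN ρ).1
  · set f : EuclideanSpace ℝ (Fin n) → EuclideanSpace ℝ (Fin n) :=
      fun x => r⁻¹ • (x - a) with hf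
    have hdist : ∀ x y, dist (f x) (f y) = r⁻¹ * dist x y := by
      intro x y
      rw [hf]
      simp only [dist_smul₀, dist_sub_right, Real.norm_eq_abs,
        abs_of_pos (inv_pos.mpr hr0)]
    have hinj : Set.InjOn f (S : Set _) := by
      intro x hx y hy hxy
      by_contra hne
      have h1 := hpair hx hy hne
      have h2 : dist (f x) (f y) = 0 := by rw [hxy, dist_self]
      rw [hdist] at h2
      have : dist x y = 0 := by
        rcases mul_eq_zero.mp h2 with h | h
        · exact absurd h (ne_of_gt (inv_pos.mpr hr0))
        · exact h
      nlinarith [mul_pos hρ0 hr0]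
    have himg : ((S.image f : Finset (EuclideanSpace ℝ (Fin n))) : Set (EuclideanSpace ℝ (Fin n))) ⊆ Metric.closedBall 0 1 := by
      intro p hp
      simp only [Finset.coe_image, Set.mem_image] at hp
      obtain ⟨x, hx, rfl⟩ := hp
      have hxa : dist x a ≤ r := (hS hx).2
      have : f a = 0 := by rw [hf]; simp
      rw [Metric.mem_closedBall, ← this, hdist]
      calc r⁻¹ * dist x a ≤ r⁻¹ * r := by
            exact mul_le_mul_of_nonneg_left hxa (le_of_lt (inv_pos.mpr hr0))
        _ = 1 := inv_mul_cancel₀ (ne_of_gt hr0)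
    have hpairimg : ((S.image f : Finset (EuclideanSpace ℝ (Fin n))) : Set (EuclideanSpace ℝ (Fin n))).Pairwise
        fun p q => ρ ≤ dist p q := by
      intro p hp q hq hpq
      simp only [Finset.coe_image, Set.mem_image] at hp hq
      obtain ⟨x, hx, rfl⟩ := hp
      obtain ⟨y, hy, rfl⟩ := hq
      have hne : x ≠ y := fun h => hpq (by rw [h])
      have h1 := hpair hx hy hne
      rw [hdist]
      calc ρ = r⁻¹ * (ρ * r) := by
            field_simp
        _ ≤ r⁻¹ * dist x y :=
            mul_le_mul_of_nonneg_left h1 (le_of_lt (inv_pos.mpr hr0))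
    have hcard : (S.image f).card = S.card :=
      Finset.card_image_of_injOn hinj
    rw [← hcard]
    exact (hN ρ).2 hρ0 (S.image f) himg hpairimg

/-- The hyperbolic dimension of Euclidean space is zero: `hypdim ℝⁿ = 0`. -/
theorem hypdim_euclidean_eq_zero (n : ℕ) : hypdim (EuclideanSpace ℝ (Fin n)) = 0 := by
  have hle : HypdimLE (EuclideanSpace ℝ (Fin n)) 0 := by
    intro d hd
    obtain ⟨N, hN⟩ := euclidean_subsetNRBounded n
    refine ⟨N, {Set.univ}, Set.sUnion_singleton _, ⟨⟨fun _ => 0, fun _ => le_refl 0,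
      fun U _ => hN U⟩, fun F _ => ⟨fun _ => 0, fun _ => le_refl 0, hN _⟩⟩, ?_, ?_⟩
    · simp only [LebesgueNumber]
      refine le_iInf fun x => ?_
      simp [EMetric.infEdist_empty]
      rw [show EMetric.infEdist x ∅ = ⊤ from Metric.infEDist_empty]; exact le_top
    · intro x F hF _
      refine le_trans (Finset.card_le_one.mpr fun a ha b hb => ?_) le_rfl
      have ha' := hF ha
      have hb' := hF hb
      simp only [Set.mem_singleton_iff] at ha' hb'
      rw [ha', hb']
  have h0 : (0 : ℕ∞) ∈ {k : ℕ∞ | ∃ m : ℕ, k = m ∧ HypdimLE (EuclideanSpace ℝ (Fin n)) m} :=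
    ⟨0, by simp, hle⟩
  exact le_antisymm (sInf_le h0) zero_le
end

section
/- Let 𝒰 = {U_j}_{j∈J} be a covering of a metric space X with multiplicity ≤ n+1 and Lebesgue number ≥ d for some d > 0. For j ∈ J define q_j(x) = min{d, dist(x, X∖U_j)} and p_j(x) = q_j(x)/∑_{i∈J} q_i(x) (the denominator is ≥ d for every x ∈ X, and at most n+1 summands are nonzero). Then for all x, x' ∈ X, ∑_{j∈J} (p_j(x) − p_j(x'))² ≤ ((n+2)²(2n+2)/d²)·d(x,x')²; in particular the map p = (p_j)_{j∈J} into the standard simplex Δ^J is λ-Lipschitz for the ℓ²-distance with λ ≤ (n+2)·√(2n+2)/d. -/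
open Metric Set ENNReal Classical

/-- `partFun d U x = min {d, dist(x, X∖U)}`, with the convention that the distance to the
empty set is `+∞` (so the value is `d` when `U` is the whole space). -/
noncomputable def partFun {X : Type*} [MetricSpace X] (d : ℝ) (U : Set X) (x : X) : ℝ :=
  if (Uᶜ : Set X).Nonempty then min d (Metric.infDist x Uᶜ) else d

lemma partFun_nonneg {X : Type*} [MetricSpace X] {d : ℝ} (hd : 0 ≤ d) (U : Set X) (x : X) :
    0 ≤ partFun d U x := by
  unfold partFun
  split
  · exact le_min hd Metric.infDist_nonneg
  · exact hd

lemma partFun_le {X : Type*} [MetricSpace X] {d : ℝ} (U : Set X) (x : X) :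
    partFun d U x ≤ d := by
  unfold partFun
  split
  · exact min_le_left _ _
  · exact le_rfl

lemma partFun_eq_zero {X : Type*} [MetricSpace X] {d : ℝ} (hd : 0 ≤ d) {U : Set X} {x : X} (hx : x ∉ U) :
    partFun d U x = 0 := by
  unfold partFun
  rw [if_pos ⟨x, hx⟩]
  rw [Metric.infDist_zero_of_mem (show x ∈ (Uᶜ : Set X) from hx)]
  exact min_eq_right hd

lemma partFun_lip {X : Type*} [MetricSpace X] {d : ℝ} (U : Set X) (x y : X) :
    partFun d U x ≤ partFun d U y + dist x y := by
  unfold partFun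
  split
  · have h1 : Metric.infDist x Uᶜ ≤ Metric.infDist y Uᶜ + dist x y :=
      Metric.infDist_le_infDist_add_dist
    rcases le_total d (Metric.infDist y Uᶜ) with h | h
    · calc min d (Metric.infDist x Uᶜ) ≤ d := min_le_left _ _
        _ ≤ min d (Metric.infDist y Uᶜ) + dist x y := by
            rw [min_eq_left h]; linarith [dist_nonneg (x := x) (y := y)]
    · calc min d (Metric.infDist x Uᶜ) ≤ Metric.infDist x Uᶜ := min_le_right _ _
        _ ≤ Metric.infDist y Uᶜ + dist x y := h1
        _ = min d (Metric.infDist y Uᶜ) + dist x y := by rw [min_eq_right h]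
  · linarith [dist_nonneg (x := x) (y := y)]

/-- The standard Lipschitz estimate for the partition of unity associated to a covering
`{U_j}_{j∈J}` with multiplicity `≤ n+1` and Lebesgue number `≥ d`.  With
`q_j(x) = min{d, dist(x, X∖U_j)}` and `p_j = q_j / ∑_i q_i`, the denominator is `≥ d`
everywhere, `∑_j (p_j(x) - p_j(x'))² ≤ ((n+2)²(2n+2)/d²)·dist(x,x')²`, and the map
`p = (p_j)` into the simplex is Lipschitz with constant `≤ (n+2)√(2n+2)/d` for the
ℓ²-distance. -/
theorem partition_of_unity_lipschitz {X : Type*} [MetricSpace X] {J : Type*}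
    (U : J → Set X) (n : ℕ) (d : ℝ) (hd : 0 < d)
    (hcov : ⋃ j, U j = Set.univ)
    (hmult : ∀ x : X, ∀ F : Finset J, (∀ j ∈ F, x ∈ U j) → F.card ≤ n + 1)
    (hLeb : ∀ x : X, ENNReal.ofReal d ≤ ⨆ j, EMetric.infEdist x (U j)ᶜ) :
    (∀ x : X, d ≤ ∑' j, partFun d (U j) x) ∧
    ∀ x x' : X,
      (∑' j, (partFun d (U j) x / ∑' i, partFun d (U i) x -
          partFun d (U j) x' / ∑' i, partFun d (U i) x') ^ 2) ≤
        ((n : ℝ) + 2) ^ 2 * (2 * (n : ℝ) + 2) / d ^ 2 * dist x x' ^ 2 ∧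
      Real.sqrt (∑' j, (partFun d (U j) x / ∑' i, partFun d (U i) x -
          partFun d (U j) x' / ∑' i, partFun d (U i) x') ^ 2) ≤
        ((n : ℝ) + 2) * Real.sqrt (2 * (n : ℝ) + 2) / d * dist x x' := by
  set q : J → X → ℝ := fun j x => partFun d (U j) x with hq_def
  have hq0 : ∀ j (x : X), 0 ≤ q j x := fun j x => partFun_nonneg hd.le _ x
  have hqd : ∀ j (x : X), q j x ≤ d := fun j x => partFun_le _ x
  have hlip : ∀ j (x y : X), q j x ≤ q j y + dist x y := fun j x y => partFun_lip _ x y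
  have hsuppq : ∀ j (x : X), x ∉ U j → q j x = 0 := fun j x hx => partFun_eq_zero hd.le hx
  -- finite support
  have hfin : ∀ x : X, {j | x ∈ U j}.Finite := by
    intro x
    by_contra h
    obtain ⟨F, hF, hcard⟩ := Set.Infinite.exists_subset_card_eq h (n + 2)
    have := hmult x F (fun j hj => hF hj)
    omega
  have hzero : ∀ (x : X) (j : J), j ∉ (hfin x).toFinset → q j x = 0 := by
    intro x j hj
    exact hsuppq j x (by simpa using hj)
  have hcard : ∀ x : X, (hfin x).toFinset.card ≤ n + 1 := by
    intro x
    exact hmult x _ (fun j hj => by simpa using hj)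
  have hsum : ∀ x : X, Summable (fun j => q j x) := fun x =>
    summable_of_ne_finset_zero (hzero x)
  set S : X → ℝ := fun x => ∑' j, q j x with hS_def
  have hS_eq : ∀ x : X, S x = ∑ j ∈ (hfin x).toFinset, q j x := fun x =>
    tsum_eq_sum (hzero x)
  -- denominator bound
  have hSd : ∀ x : X, d ≤ S x := by
    intro x
    refine le_of_forall_pos_le_add ?_
    intro ε hε
    have h1 : ENNReal.ofReal (d - ε) < ⨆ j, EMetric.infEdist x (U j)ᶜ := by
      refine lt_of_lt_of_le ?_ (hLeb x)
      exact (ENNReal.ofReal_lt_ofReal_iff hd).2 (by linarith)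
    obtain ⟨j, hj⟩ := lt_iSup_iff.1 h1
    have hqj : d - ε ≤ q j x := by
      show d - ε ≤ partFun d (U j) x
      unfold partFun
      split
      · rename_i hne
        have hne' : EMetric.infEdist x (U j)ᶜ ≠ ⊤ := Metric.infEdist_ne_top hne
        have h2 : d - ε ≤ Metric.infDist x (U j)ᶜ :=
          (ENNReal.ofReal_le_iff_le_toReal hne').1 hj.le
        exact le_min (by linarith) h2
      · linarith
    have h3 : q j x ≤ S x := Summable.le_tsum (hsum x) j (fun b _ => hq0 b x)
    linarith
  have hS0 : ∀ x : X, 0 < S x := fun x => lt_of_lt_of_le hd (hSd x)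
  -- Lipschitz bound on S
  have hSlip : ∀ x y : X, S x ≤ S y + ((n : ℝ) + 1) * dist x y := by
    intro x y
    have h1 : S x ≤ ∑ j ∈ (hfin x).toFinset, (q j y + dist x y) := by
      rw [hS_eq x]
      exact Finset.sum_le_sum (fun j _ => hlip j x y)
    have h2 : ∑ j ∈ (hfin x).toFinset, (q j y + dist x y) =
        (∑ j ∈ (hfin x).toFinset, q j y) + (hfin x).toFinset.card * dist x y := by
      rw [Finset.sum_add_distrib, Finset.sum_const, nsmul_eq_mul]
    have h3 : ∑ j ∈ (hfin x).toFinset, q j y ≤ S y :=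
      Summable.sum_le_tsum _ (fun b _ => hq0 b y) (hsum y)
    have h4 : ((hfin x).toFinset.card : ℝ) * dist x y ≤ ((n : ℝ) + 1) * dist x y := by
      apply mul_le_mul_of_nonneg_right _ dist_nonneg
      exact_mod_cast hcard x
    linarith
  have hSabs : ∀ x y : X, |S x - S y| ≤ ((n : ℝ) + 1) * dist x y := by
    intro x y
    rw [abs_sub_le_iff]
    constructor
    · linarith [hSlip x y]
    · rw [dist_comm x y] at *
      linarith [hSlip y x]
  refine ⟨hSd, ?_⟩
  intro x x'
  set A := dist x x' with hA_def
  have hA0 : 0 ≤ A := dist_nonneg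
  set p : J → X → ℝ := fun j z => q j z / S z with hp_def
  -- per-term bound
  have hterm : ∀ j : J, |p j x - p j x'| ≤ ((n : ℝ) + 2) * A / d := by
    intro j
    have hqlip : |q j x - q j x'| ≤ A := by
      rw [abs_sub_le_iff]
      constructor
      · linarith [hlip j x x']
      · have := hlip j x' x
        rw [dist_comm] at this
        linarith
    have hid : p j x - p j x' =
        (q j x - q j x') / S x + (q j x' / S x') * ((S x' - S x) / S x) := by
      simp only [hp_def]
      field_simp [hp_def, (hS0 x).ne', (hS0 x').ne']
      ring
    have hb1 : |(q j x - q j x') / S x| ≤ A / d := by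
      rw [abs_div, abs_of_pos (hS0 x)]
      exact div_le_div₀ hA0 hqlip hd (hSd x)
    have hb2 : |(q j x' / S x') * ((S x' - S x) / S x)| ≤ ((n : ℝ) + 1) * A / d := by
      rw [abs_mul]
      have hfrac : |q j x' / S x'| ≤ 1 := by
        rw [abs_div, abs_of_nonneg (hq0 j x'), abs_of_pos (hS0 x')]
        exact div_le_one_of_le₀ ((hqd j x').trans (hSd x')) (hS0 x').le
      have h2 : |(S x' - S x) / S x| ≤ ((n : ℝ) + 1) * A / d := by
        rw [abs_div, abs_of_pos (hS0 x)]
        apply div_le_div₀ (by positivity) _ hd (hSd x)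
        have := hSabs x' x
        rwa [dist_comm x' x] at this
      calc |q j x' / S x'| * |(S x' - S x) / S x| ≤ 1 * (((n : ℝ) + 1) * A / d) :=
            mul_le_mul hfrac h2 (abs_nonneg _) zero_le_one
        _ = ((n : ℝ) + 1) * A / d := one_mul _
    calc |p j x - p j x'| ≤ |(q j x - q j x') / S x| +
          |(q j x' / S x') * ((S x' - S x) / S x)| := by rw [hid]; exact abs_add_le _ _
      _ ≤ A / d + ((n : ℝ) + 1) * A / d := add_le_add hb1 hb2
      _ = ((n : ℝ) + 2) * A / d := by ring
  -- the support finset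
  set T : Finset J := (hfin x).toFinset ∪ (hfin x').toFinset with hT_def
  have hTcard : (T.card : ℝ) ≤ 2 * (n : ℝ) + 2 := by
    have h1 : T.card ≤ (hfin x).toFinset.card + (hfin x').toFinset.card :=
      Finset.card_union_le _ _
    have := hcard x
    have := hcard x'
    push_cast
    have : T.card ≤ 2 * n + 2 := by omega
    exact_mod_cast this
  have hTzero : ∀ j ∉ T, (p j x - p j x') ^ 2 = 0 := by
    intro j hj
    rw [Finset.mem_union, not_or] at hj
    have h1 : q j x = 0 := hzero x j hj.1
    have h2 : q j x' = 0 := hzero x' j hj.2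
    simp [hp_def, h1, h2]
  have hmain : (∑' j, (p j x - p j x') ^ 2) ≤
      ((n : ℝ) + 2) ^ 2 * (2 * (n : ℝ) + 2) / d ^ 2 * A ^ 2 := by
    rw [tsum_eq_sum hTzero]
    have hstep : ∀ j ∈ T, (p j x - p j x') ^ 2 ≤ (((n : ℝ) + 2) * A / d) ^ 2 := by
      intro j _
      have := hterm j
      calc (p j x - p j x') ^ 2 = |p j x - p j x'| ^ 2 := (sq_abs _).symm
        _ ≤ (((n : ℝ) + 2) * A / d) ^ 2 := by
            apply pow_le_pow_left₀ (abs_nonneg _) this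
    calc ∑ j ∈ T, (p j x - p j x') ^ 2 ≤ ∑ j ∈ T, (((n : ℝ) + 2) * A / d) ^ 2 :=
          Finset.sum_le_sum hstep
      _ = T.card * (((n : ℝ) + 2) * A / d) ^ 2 := by rw [Finset.sum_const, nsmul_eq_mul]
      _ ≤ (2 * (n : ℝ) + 2) * (((n : ℝ) + 2) * A / d) ^ 2 := by
          apply mul_le_mul_of_nonneg_right hTcard (by positivity)
      _ = ((n : ℝ) + 2) ^ 2 * (2 * (n : ℝ) + 2) / d ^ 2 * A ^ 2 := by
          field_simp
  refine ⟨hmain, ?_⟩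
  have hkey : (((n : ℝ) + 2) * Real.sqrt (2 * (n : ℝ) + 2) / d * A) ^ 2 =
      ((n : ℝ) + 2) ^ 2 * (2 * (n : ℝ) + 2) / d ^ 2 * A ^ 2 := by
    rw [mul_pow, div_pow, mul_pow, Real.sq_sqrt (by positivity)]
  calc Real.sqrt (∑' j, (p j x - p j x') ^ 2) ≤
        Real.sqrt (((n : ℝ) + 2) ^ 2 * (2 * (n : ℝ) + 2) / d ^ 2 * A ^ 2) :=
        Real.sqrt_le_sqrt hmain
    _ = ((n : ℝ) + 2) * Real.sqrt (2 * (n : ℝ) + 2) / d * A := by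
        rw [← hkey, Real.sqrt_sq (by positivity)]
end

section
/- If f : X → X' is a quasi-isometric map between metric spaces, then hypdim X ≤ hypdim X'. -/
open Metric Set ENNReal

lemma SubsetNRBounded.mono {X : Type*} [MetricSpace X] {A B : Set X} {N : ℝ → ℕ} {R : ℝ → ℝ}
    (h : SubsetNRBounded B N R) (hAB : A ⊆ B) : SubsetNRBounded A N R := by
  intro ρ h0 h1 r hr a ha S hS hp
  exact h ρ h0 h1 r hr a (hAB ha) S
    (hS.trans (Set.inter_subset_inter_left _ hAB)) hp

lemma transfer_bounded {X X' : Type*} [MetricSpace X] [MetricSpace X'] (f : X → X')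
    {Λ lam : ℝ} (hΛ : 1 ≤ Λ) (hlam : 0 ≤ lam)
    (hQ : ∀ x x' : X,
      dist x x' / Λ - lam ≤ dist (f x) (f x') ∧ dist (f x) (f x') ≤ Λ * dist x x' + lam)
    {A : Set X'} {N : ℝ → ℕ} {R : ℝ → ℝ} (h : SubsetNRBounded A N R) :
    SubsetNRBounded (f ⁻¹' A) (fun ρ => N (ρ / (2 * Λ ^ 2)))
      (fun ρ => max (R (ρ / (2 * Λ ^ 2))) (4 * Λ * lam / ρ + 1)) := by
  classical
  intro ρ hρ0 hρ1 r hr a ha S hS hpair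
  have hΛ0 : (0:ℝ) < Λ := lt_of_lt_of_le one_pos hΛ
  have hr1 : 4 * Λ * lam / ρ + 1 ≤ r := le_trans (le_max_right _ _) hr
  have hr0 : (0:ℝ) < r := lt_of_lt_of_le (by positivity) hr1
  have hρr : 4 * Λ * lam + ρ ≤ ρ * r := by
    have h' : ρ * (4 * Λ * lam / ρ + 1) ≤ ρ * r := mul_le_mul_of_nonneg_left hr1 hρ0.le
    have h'' : ρ * (4 * Λ * lam / ρ) = 4 * Λ * lam := by field_simp
    nlinarith [h', h'']
  set ρ' := ρ / (2 * Λ ^ 2) with hρ'def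
  have hρ'0 : 0 < ρ' := by positivity
  have hρ'1 : ρ' < 1 := by
    have h2 : (2:ℝ) ≤ 2 * Λ ^ 2 := by nlinarith
    have : ρ' ≤ ρ / 2 := div_le_div_of_nonneg_left hρ0.le two_pos h2
    linarith
  have hΛlam : 0 ≤ Λ * lam := mul_nonneg hΛ0.le hlam
  -- f is injective on S
  have hinj : Set.InjOn f (S : Set X) := by
    intro p hp q hq hfeq
    by_contra hne
    have hd := hpair hp hq hne
    have h1 := (hQ p q).1
    rw [hfeq, dist_self] at h1
    have h2 : dist p q ≤ Λ * lam := by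
      have h1' : dist p q / Λ ≤ lam := by linarith
      calc dist p q = dist p q / Λ * Λ := by field_simp
        _ ≤ lam * Λ := mul_le_mul_of_nonneg_right h1' hΛ0.le
        _ = Λ * lam := mul_comm _ _
    nlinarith [hd, h2, hρr]
  set T := S.image f with hTdef
  have hcard : T.card = S.card := Finset.card_image_of_injOn hinj
  have hr' : R ρ' ≤ Λ * r + lam := by
    have h1 : R ρ' ≤ r := le_trans (le_max_left _ _) hr
    nlinarith
  have hfa : f a ∈ A := ha
  have key : ρ' * (Λ * r + lam) ≤ ρ * r / Λ - lam := by
    rw [hρ'def, le_sub_iff_add_le, div_mul_eq_mul_div, div_add' _ _ _ (by positivity),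
      div_le_div_iff₀ (by positivity) hΛ0]
    nlinarith [hρr, hΛlam, mul_le_mul_of_nonneg_left hρr hΛ0.le,
      mul_le_mul_of_nonneg_right hρ1.le hlam, sq_nonneg Λ, sq_nonneg (Λ - 1)]
  have hsub : (T : Set X') ⊆ A ∩ Metric.closedBall (f a) (Λ * r + lam) := by
    intro t ht
    rw [hTdef, Finset.coe_image] at ht
    obtain ⟨s, hs, rfl⟩ := ht
    have hs' := hS hs
    refine ⟨hs'.1, ?_⟩
    rw [Metric.mem_closedBall]
    have h1 := (hQ s a).2
    have h2 : dist s a ≤ r := Metric.mem_closedBall.mp hs'.2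
    nlinarith
  have hpairT : (T : Set X').Pairwise fun p q => ρ' * (Λ * r + lam) ≤ dist p q := by
    intro p hp q hq hne
    rw [hTdef, Finset.coe_image] at hp hq
    obtain ⟨s, hs, rfl⟩ := hp
    obtain ⟨t, ht, rfl⟩ := hq
    have hst : s ≠ t := fun e => hne (by rw [e])
    have h1 := (hQ s t).1
    have h2 : ρ * r ≤ dist s t := hpair hs ht hst
    have h3 : ρ * r / Λ ≤ dist s t / Λ := by gcongr
    linarith [key]
  have := h ρ' hρ'0 hρ'1 (Λ * r + lam) hr' (f a) hfa T hsub hpairT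
  calc S.card = T.card := hcard.symm
    _ ≤ N ρ' := this

lemma hypdimLE_transfer {X X' : Type*} [MetricSpace X] [MetricSpace X'] (f : X → X')
    (hf : QuasiIsometricMap f) (n : ℕ) (h : HypdimLE X' n) : HypdimLE X n := by
  classical
  obtain ⟨Λ, lam, hΛ, hlam, hQ⟩ := hf
  have hΛ0 : (0:ℝ) < Λ := lt_of_lt_of_le one_pos hΛ
  intro d hd
  obtain ⟨N, 𝒰', hcov, hUB, hLeb, hmult⟩ := h (Λ * d + lam + 1) (by nlinarith)
  set 𝒰 : Set (Set X) := (fun U => f ⁻¹' U) '' 𝒰' with h𝒰def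
  -- a choice function
  have hgx : ∀ V ∈ 𝒰, ∃ U, U ∈ 𝒰' ∧ f ⁻¹' U = V := fun V hV => hV
  set g : Set X → Set X' := fun V => if h : ∃ U, U ∈ 𝒰' ∧ f ⁻¹' U = V then h.choose else ∅
    with hgdef
  have hg : ∀ V ∈ 𝒰, g V ∈ 𝒰' ∧ f ⁻¹' (g V) = V := by
    intro V hV
    have hV' := hgx V hV
    simp only [hgdef, dif_pos hV']
    exact hV'.choose_spec
  refine ⟨fun ρ => N (ρ / (2 * Λ ^ 2)), 𝒰, ?_, ⟨?_, ?_⟩, ?_, ?_⟩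
  · -- covering
    ext x
    simp only [Set.mem_univ, iff_true, Set.mem_sUnion]
    have : f x ∈ ⋃₀ 𝒰' := by rw [hcov]; trivial
    obtain ⟨U, hU, hxU⟩ := this
    exact ⟨f ⁻¹' U, Set.mem_image_of_mem _ hU, hxU⟩
  · -- uniform boundedness of elements
    obtain ⟨R, hR0, hRU⟩ := hUB.1
    refine ⟨fun ρ => max (R (ρ / (2 * Λ ^ 2))) (4 * Λ * lam / ρ + 1),
      fun ρ => le_trans (hR0 _) (le_max_left _ _), ?_⟩
    rintro V ⟨U, hU, rfl⟩
    exact transfer_bounded f hΛ hlam hQ (hRU U hU)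
  · -- finite unions
    intro F hF
    set F' : Finset (Set X') := F.image g with hF'def
    have hF'sub : (F' : Set (Set X')) ⊆ 𝒰' := by
      intro U hU
      rw [hF'def, Finset.coe_image] at hU
      obtain ⟨V, hV, rfl⟩ := hU
      exact (hg V (hF hV)).1
    obtain ⟨R2, hR20, hB⟩ := hUB.2 F' hF'sub
    have hsubU : ⋃₀ (F : Set (Set X)) ⊆ f ⁻¹' (⋃₀ (F' : Set (Set X'))) := by
      rintro x ⟨V, hV, hxV⟩
      refine ⟨g V, ?_, ?_⟩
      · rw [hF'def, Finset.coe_image]; exact ⟨V, hV, rfl⟩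
      · have hVeq := (hg V (hF hV)).2
        rw [← hVeq] at hxV
        exact hxV
    exact ⟨fun ρ => max (R2 (ρ / (2 * Λ ^ 2))) (4 * Λ * lam / ρ + 1),
      fun ρ => le_trans (hR20 _) (le_max_left _ _),
      (transfer_bounded f hΛ hlam hQ hB).mono hsubU⟩
  · -- Lebesgue number
    refine le_iInf fun x => ?_
    have h1 : ENNReal.ofReal (Λ * d + lam) < ⨆ U ∈ 𝒰', EMetric.infEdist (f x) Uᶜ := by
      calc ENNReal.ofReal (Λ * d + lam) < ENNReal.ofReal (Λ * d + lam + 1) := by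
            rw [ENNReal.ofReal_lt_ofReal_iff (by nlinarith)]; linarith
        _ ≤ LebesgueNumber 𝒰' := hLeb
        _ ≤ _ := iInf_le _ (f x)
    simp only [lt_iSup_iff] at h1
    obtain ⟨U, hU, hgt⟩ := h1
    refine le_trans ?_ (le_iSup₂_of_le (f ⁻¹' U) (Set.mem_image_of_mem _ hU) le_rfl)
    refine EMetric.le_infEdist.2 ?_
    intro y hy
    have hy' : f y ∈ Uᶜ := hy
    have h2 : EMetric.infEdist (f x) Uᶜ ≤ edist (f x) (f y) :=
      EMetric.infEdist_le_edist_of_mem hy'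
    have h3 : ENNReal.ofReal (Λ * d + lam) < edist (f x) (f y) := hgt.trans_le h2
    rw [edist_dist] at h3
    have h4 : Λ * d + lam < dist (f x) (f y) :=
      (ENNReal.ofReal_lt_ofReal_iff_of_nonneg (by nlinarith)).mp h3
    have h5 := (hQ x y).2
    have h6 : d < dist x y := by
      have : Λ * d < Λ * dist x y := by linarith
      exact lt_of_mul_lt_mul_left this hΛ0.le
    rw [edist_dist]
    exact ENNReal.ofReal_le_ofReal h6.le
  · -- multiplicity
    intro x F hF hxF
    have hinj : Set.InjOn g (F : Set (Set X)) := by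
      intro V hV W hW heq
      rw [← (hg V (hF hV)).2, ← (hg W (hF hW)).2, heq]
    have hsub : ((F.image g : Finset (Set X')) : Set (Set X')) ⊆ 𝒰' := by
      intro U hU
      rw [Finset.coe_image] at hU
      obtain ⟨V, hV, rfl⟩ := hU
      exact (hg V (hF hV)).1
    have hmem : ∀ U ∈ F.image g, f x ∈ U := by
      intro U hU
      obtain ⟨V, hV, rfl⟩ := Finset.mem_image.mp hU
      have : x ∈ V := hxF V hV
      rw [← (hg V (hF hV)).2] at this
      exact this
    have := hmult (f x) (F.image g) hsub hmem
    rwa [Finset.card_image_of_injOn hinj] at this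

/-- Theorem 4.1 (monotonicity): if there is a quasi-isometric map `f : X → X'`, then
`hypdim X ≤ hypdim X'`. -/
theorem hypdim_mono {X X' : Type*} [MetricSpace X] [MetricSpace X'] (f : X → X')
    (hf : QuasiIsometricMap f) : hypdim X ≤ hypdim X' := by
  apply sInf_le_sInf
  rintro k ⟨n, rfl, h⟩
  exact ⟨n, rfl, hypdimLE_transfer f hf n h⟩
end

section
/- Let n ≥ 1 and let x, x' ∈ ℝⁿ satisfy x_j ≥ 0 and x'_j ≥ 0 for all j, max_j x_j = 1 and max_j x'_j = 1. Define π(x) = x/∑_j x_j. Then |π(x) − π(x')| ≤ (n+1)·|x − x'| (Euclidean norms). In other words, the radial projection π_J : Q^J → Δ^J restricted to any n-dimensional coordinate subspace is Lipschitz with Lipschitz constant ≤ n+1. -/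
open RealInnerProductSpace


/-- Lemma 4.4: the radial projection `π(x) = x / ∑_j x_j`, restricted to the part of an
`n`-dimensional coordinate subspace where all coordinates are nonnegative and the maximal
coordinate equals `1`, is Lipschitz with constant `≤ n+1`. -/
theorem radial_projection_lipschitz (n : ℕ) (hn : 1 ≤ n)
    (x x' : EuclideanSpace ℝ (Fin n))
    (hx : ∀ j, 0 ≤ x j) (hx' : ∀ j, 0 ≤ x' j)
    (hxle : ∀ j, x j ≤ 1) (hxmax : ∃ j, x j = 1)
    (hx'le : ∀ j, x' j ≤ 1) (hx'max : ∃ j, x' j = 1) :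
    ‖(∑ j, x j)⁻¹ • x - (∑ j, x' j)⁻¹ • x'‖ ≤ ((n : ℝ) + 1) * ‖x - x'‖ := by
  set s := ∑ j, x j with hs_def
  set s' := ∑ j, x' j with hs'_def
  -- s ≥ 1, s' ≥ 1
  obtain ⟨j0, hj0⟩ := hxmax
  obtain ⟨j1, hj1⟩ := hx'max
  have hs1 : (1 : ℝ) ≤ s := by
    rw [← hj0]
    exact Finset.single_le_sum (fun i _ => hx i) (Finset.mem_univ j0)
  have hs'1 : (1 : ℝ) ≤ s' := by
    rw [← hj1]
    exact Finset.single_le_sum (fun i _ => hx' i) (Finset.mem_univ j1)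
  have hspos : (0 : ℝ) < s := lt_of_lt_of_le one_pos hs1
  have hs'pos : (0 : ℝ) < s' := lt_of_lt_of_le one_pos hs'1
  -- ‖x'‖ ≤ s'
  have hx'norm : ‖x'‖ ≤ s' := by
    have h1 : ‖x'‖ ^ 2 ≤ s' := by
      rw [← real_inner_self_eq_norm_sq]
      rw [PiLp.inner_apply]
      apply Finset.sum_le_sum
      intro i _
      simp only [RCLike.inner_apply, conj_trivial]
      nlinarith [hx' i, hx'le i]
    nlinarith [norm_nonneg x']
  -- |s - s'| ≤ n * ‖x - x'‖
  have hsum_diff : |s - s'| ≤ (n : ℝ) * ‖x - x'‖ := by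
    set v : EuclideanSpace ℝ (Fin n) := WithLp.toLp 2 (fun _ => (1 : ℝ)) with hv
    have hinner : ⟪v, x - x'⟫ = s - s' := by
      simp only [PiLp.inner_apply, RCLike.inner_apply, conj_trivial, hv, PiLp.toLp_apply,
        PiLp.sub_apply, one_mul, mul_one, Finset.sum_sub_distrib, hs_def, hs'_def]
    have hcs := abs_real_inner_le_norm v (x - x')
    rw [hinner] at hcs
    have hvnorm : ‖v‖ = Real.sqrt n := by
      rw [EuclideanSpace.norm_eq]
      simp [hv]
    have hsqrtn : Real.sqrt n ≤ n := by
      have : Real.sqrt n ≤ Real.sqrt ((n : ℝ) ^ 2) := by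
        apply Real.sqrt_le_sqrt
        have h1 : (1 : ℝ) ≤ n := by exact_mod_cast hn
        nlinarith
      rwa [Real.sqrt_sq (by positivity)] at this
    calc |s - s'| ≤ ‖v‖ * ‖x - x'‖ := hcs
      _ = Real.sqrt n * ‖x - x'‖ := by rw [hvnorm]
      _ ≤ (n : ℝ) * ‖x - x'‖ := by
          apply mul_le_mul_of_nonneg_right hsqrtn (norm_nonneg _)
  -- decomposition
  have hdecomp : s⁻¹ • x - s'⁻¹ • x' = s⁻¹ • (x - x') + (s⁻¹ - s'⁻¹) • x' := by
    rw [smul_sub, sub_smul]; abel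
  rw [hdecomp]
  have h1 : ‖s⁻¹ • (x - x')‖ ≤ ‖x - x'‖ := by
    rw [norm_smul, Real.norm_eq_abs, abs_of_pos (inv_pos.mpr hspos)]
    have : s⁻¹ ≤ 1 := inv_le_one_of_one_le₀ hs1
    nlinarith [norm_nonneg (x - x')]
  have h2 : ‖(s⁻¹ - s'⁻¹) • x'‖ ≤ (n : ℝ) * ‖x - x'‖ := by
    rw [norm_smul, Real.norm_eq_abs]
    have heq : s⁻¹ - s'⁻¹ = (s' - s) * (s⁻¹ * s'⁻¹) := by
      field_simp
    rw [heq, abs_mul, abs_of_pos (by positivity : (0:ℝ) < s⁻¹ * s'⁻¹)]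
    have habs : |s' - s| ≤ (n : ℝ) * ‖x - x'‖ := by rwa [abs_sub_comm]
    have hinv1 : s⁻¹ ≤ 1 := inv_le_one_of_one_le₀ hs1
    have hx'inv : s'⁻¹ * ‖x'‖ ≤ 1 := by
      rw [← div_eq_inv_mul, div_le_one hs'pos]
      exact hx'norm
    calc |s' - s| * (s⁻¹ * s'⁻¹) * ‖x'‖
        = |s' - s| * s⁻¹ * (s'⁻¹ * ‖x'‖) := by ring
      _ ≤ |s' - s| * 1 * 1 := by
          apply mul_le_mul _ hx'inv (by positivity) (by positivity)
          apply mul_le_mul_of_nonneg_left hinv1 (abs_nonneg _)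
      _ = |s' - s| := by ring
      _ ≤ (n : ℝ) * ‖x - x'‖ := habs
  calc ‖s⁻¹ • (x - x') + (s⁻¹ - s'⁻¹) • x'‖
      ≤ ‖s⁻¹ • (x - x')‖ + ‖(s⁻¹ - s'⁻¹) • x'‖ := norm_add_le _ _
    _ ≤ ‖x - x'‖ + (n : ℝ) * ‖x - x'‖ := add_le_add h1 h2
    _ = ((n : ℝ) + 1) * ‖x - x'‖ := by ring
end

section
/- Let n ≥ 1 and let x, x' ∈ ℝⁿ satisfy x_j ≥ 0 and x'_j ≥ 0 for all j, ∑_j x_j = 1 and ∑_j x'_j = 1. Define ω(x) = x/(max_j x_j). Then |ω(x) − ω(x')| ≤ n(1+√n)·|x − x'| (Euclidean norms). In other words, the inverse radial projection ω_J : Δ^J → Q^J restricted to any n-dimensional coordinate subspace is Lipschitz with Lipschitz constant ≤ n(1+√n). -/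
lemma coord_le_norm_aux {n : ℕ} (y : EuclideanSpace ℝ (Fin n)) (j : Fin n) :
    |y j| ≤ ‖y‖ := by
  rw [EuclideanSpace.norm_eq]
  have h1 : |y j| = Real.sqrt (‖y j‖ ^ 2) := by
    rw [Real.sqrt_sq_eq_abs, abs_norm, Real.norm_eq_abs]
  rw [h1]
  apply Real.sqrt_le_sqrt
  exact Finset.single_le_sum (fun i _ => sq_nonneg ‖y i‖) (Finset.mem_univ j)

/-- Lemma 4.5: the inverse radial projection `ω(x) = x / max_j x_j`, restricted to the
part of an `n`-dimensional coordinate subspace where all coordinates are nonnegative and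
the coordinates sum to `1`, is Lipschitz with constant `≤ n(1+√n)`. -/
theorem inverse_radial_projection_lipschitz (n : ℕ) (hn : 1 ≤ n)
    (x x' : EuclideanSpace ℝ (Fin n))
    (hx : ∀ j, 0 ≤ x j) (hx' : ∀ j, 0 ≤ x' j)
    (hxsum : ∑ j, x j = 1) (hx'sum : ∑ j, x' j = 1) :
    ‖(⨆ j, x j)⁻¹ • x - (⨆ j, x' j)⁻¹ • x'‖ ≤
      (n : ℝ) * (1 + Real.sqrt n) * ‖x - x'‖ := by
  have hne : Nonempty (Fin n) := ⟨⟨0, hn⟩⟩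
  set M : ℝ := ⨆ j, x j with hMdef
  set M' : ℝ := ⨆ j, x' j with hM'def
  set d : ℝ := ‖x - x'‖ with hddef
  have hd0 : 0 ≤ d := norm_nonneg _
  have hnpos : (0:ℝ) < n := by exact_mod_cast hn
  -- coordinate bounds
  have hcoord : ∀ j, |x j - x' j| ≤ d := by
    intro j
    have := coord_le_norm_aux (x - x') j
    simpa using this
  -- sup bounds
  have hbx : BddAbove (Set.range x) := (Set.finite_range x).bddAbove
  have hbx' : BddAbove (Set.range x') := (Set.finite_range x').bddAbove
  have hxleM : ∀ j, x j ≤ M := fun j => le_ciSup hbx j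
  have hx'leM' : ∀ j, x' j ≤ M' := fun j => le_ciSup hbx' j
  have hMlow : (n:ℝ)⁻¹ ≤ M := by
    rw [inv_le_iff_one_le_mul₀ hnpos]
    calc (1:ℝ) = ∑ j, x j := hxsum.symm
    _ ≤ ∑ _j : Fin n, M := Finset.sum_le_sum fun j _ => hxleM j
    _ = M * n := by rw [Finset.sum_const, nsmul_eq_mul, Finset.card_univ, Fintype.card_fin, mul_comm]
  have hM'low : (n:ℝ)⁻¹ ≤ M' := by
    rw [inv_le_iff_one_le_mul₀ hnpos]
    calc (1:ℝ) = ∑ j, x' j := hx'sum.symm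
    _ ≤ ∑ _j : Fin n, M' := Finset.sum_le_sum fun j _ => hx'leM' j
    _ = M' * n := by rw [Finset.sum_const, nsmul_eq_mul, Finset.card_univ, Fintype.card_fin, mul_comm]
  have hMpos : 0 < M := lt_of_lt_of_le (by positivity) hMlow
  have hM'pos : 0 < M' := lt_of_lt_of_le (by positivity) hM'low
  -- |M - M'| ≤ d
  have hMM' : |M - M'| ≤ d := by
    rw [abs_sub_le_iff]
    constructor
    · have : M ≤ M' + d := by
        apply ciSup_le
        intro j
        have h1 : x j - x' j ≤ |x j - x' j| := le_abs_self _
        have := hcoord j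
        have := hx'leM' j
        linarith
      linarith
    · have : M' ≤ M + d := by
        apply ciSup_le
        intro j
        have h1 : x' j - x j ≤ |x j - x' j| := by
          rw [abs_sub_comm]; exact le_abs_self _
        have := hcoord j
        have := hxleM j
        linarith
      linarith
  -- ‖x'‖ ≤ √M'
  set m : ℝ := Real.sqrt M' with hmdef
  have hmpos : 0 < m := Real.sqrt_pos.mpr hM'pos
  have hmsq : m ^ 2 = M' := Real.sq_sqrt hM'pos.le
  have hx'norm : ‖x'‖ ≤ m := by
    rw [EuclideanSpace.norm_eq]
    apply Real.sqrt_le_sqrt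
    · calc ∑ j, ‖x' j‖ ^ 2 = ∑ j, (x' j) ^ 2 := by
            simp [Real.norm_eq_abs, sq_abs]
        _ ≤ ∑ j, M' * x' j := by
            apply Finset.sum_le_sum
            intro j _
            have := hx'leM' j
            nlinarith [hx' j]
        _ = M' * ∑ j, x' j := by rw [Finset.mul_sum]
        _ = M' := by rw [hx'sum, mul_one]
  -- set s = √n
  set s : ℝ := Real.sqrt n with hsdef
  have hspos : 0 < s := Real.sqrt_pos.mpr hnpos
  have hssq : s ^ 2 = n := Real.sq_sqrt hnpos.le
  -- M⁻¹ ≤ n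
  have hMinv : M⁻¹ ≤ n := by
    calc M⁻¹ ≤ ((n:ℝ)⁻¹)⁻¹ := by
          apply inv_anti₀ (by positivity) hMlow
      _ = n := inv_inv _
  -- m⁻¹ ≤ s
  have hminv : m⁻¹ ≤ s := by
    have h1 : s⁻¹ ≤ m := by
      have : Real.sqrt (n:ℝ)⁻¹ ≤ m := Real.sqrt_le_sqrt hM'low
      rwa [Real.sqrt_inv] at this
    calc m⁻¹ ≤ (s⁻¹)⁻¹ := inv_anti₀ (by positivity) h1
      _ = s := inv_inv _
  -- decomposition
  have hdecomp : M⁻¹ • x - M'⁻¹ • x' = M⁻¹ • (x - x') + (M⁻¹ - M'⁻¹) • x' := by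
    module
  have hinvdiff : M⁻¹ - M'⁻¹ = (M' - M) * (M⁻¹ * M'⁻¹) := by
    field_simp
  calc ‖M⁻¹ • x - M'⁻¹ • x'‖
      ≤ ‖M⁻¹ • (x - x')‖ + ‖(M⁻¹ - M'⁻¹) • x'‖ := by
        rw [hdecomp]; exact norm_add_le _ _
    _ = |M⁻¹| * d + |M⁻¹ - M'⁻¹| * ‖x'‖ := by
        rw [norm_smul, norm_smul, Real.norm_eq_abs, Real.norm_eq_abs]
    _ = M⁻¹ * d + |M - M'| * (M⁻¹ * M'⁻¹) * ‖x'‖ := by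
        rw [abs_of_pos (inv_pos.mpr hMpos), hinvdiff, abs_mul,
          abs_of_pos (mul_pos (inv_pos.mpr hMpos) (inv_pos.mpr hM'pos)),
          abs_sub_comm]
    _ ≤ (n:ℝ) * d + d * (M⁻¹ * M'⁻¹) * m := by
        gcongr
    _ = d * (M⁻¹ * m⁻¹) + (n:ℝ) * d := by
        have : M'⁻¹ * m = m⁻¹ := by
          rw [← hmsq]; field_simp
        rw [add_comm]
        rw [show d * (M⁻¹ * M'⁻¹) * m = d * (M⁻¹ * (M'⁻¹ * m)) by ring, this]
    _ ≤ d * ((n:ℝ) * s) + (n:ℝ) * d := by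
        gcongr
    _ = (n:ℝ) * (1 + s) * d := by ring
end

section
/- Let 𝒲 be a locally finite collection of subsets of the ray [0,∞), each of finite diameter. Then there exists a 1-Lipschitz homeomorphism f : [0,∞) → [0,∞) such that every set f(W), W ∈ 𝒲, has diameter at most 1. -/
open Metric Set

noncomputable def rampAux (b : ℕ → ℝ) (k : ℕ) (t : ℝ) : ℝ :=
  (min t (b (k+1)) - min t (b k)) / (b (k+1) - b k)

noncomputable def ctrAux (b : ℕ → ℝ) (t : ℝ) : ℝ :=
  (1/2) * ∑ k ∈ Finset.range ⌈t⌉₊, rampAux b k t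

lemma min_sub_min_mono {x y c d : ℝ} (hxy : x ≤ y) (hcd : c ≤ d) :
    min y c - min x c ≤ min y d - min x d := by
  simp only [min_def]; split_ifs <;> linarith

lemma min_sub_min_le {x y c : ℝ} (hxy : x ≤ y) : min y c - min x c ≤ y - x := by
  simp only [min_def]; split_ifs <;> linarith

section

variable {b : ℕ → ℝ}

lemma b_mono' (hb : ∀ k, b k + 1 ≤ b (k+1)) : StrictMono b :=
  strictMono_nat_of_lt_succ fun k => by linarith [hb k]

lemma b_ge (hb0 : b 0 = 0) (hb : ∀ k, b k + 1 ≤ b (k+1)) (k : ℕ) : (k : ℝ) ≤ b k := by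
  induction k with
  | zero => simp [hb0]
  | succ n ih => push_cast; linarith [hb n]

lemma b_nonneg (hb0 : b 0 = 0) (hb : ∀ k, b k + 1 ≤ b (k+1)) (k : ℕ) : 0 ≤ b k :=
  le_trans (by positivity) (b_ge hb0 hb k)

lemma ramp_nonneg (hb : ∀ k, b k + 1 ≤ b (k+1)) (k : ℕ) (t : ℝ) : 0 ≤ rampAux b k t := by
  have h := hb k
  apply div_nonneg _ (by linarith)
  have : min t (b k) ≤ min t (b (k+1)) := min_le_min le_rfl (by linarith)
  linarith

lemma ramp_zero (hb : ∀ k, b k + 1 ≤ b (k+1)) {k : ℕ} {t : ℝ} (h : t ≤ b k) :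
    rampAux b k t = 0 := by
  have h2 : t ≤ b (k+1) := by linarith [hb k]
  unfold rampAux
  rw [min_eq_left h2, min_eq_left h, sub_self, zero_div]

lemma ramp_one (hb : ∀ k, b k + 1 ≤ b (k+1)) {k : ℕ} {t : ℝ} (h : b (k+1) ≤ t) :
    rampAux b k t = 1 := by
  have h2 : b k ≤ t := by linarith [hb k]
  rw [rampAux, min_eq_right h, min_eq_right h2]
  have h3 : b (k+1) - b k ≠ 0 := by linarith [hb k]
  exact div_self h3

lemma ramp_mono (hb : ∀ k, b k + 1 ≤ b (k+1)) (k : ℕ) : Monotone (rampAux b k) := by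
  intro x y hxy
  have h := hb k
  have hnum : min x (b (k+1)) - min x (b k) ≤ min y (b (k+1)) - min y (b k) := by
    have := min_sub_min_mono hxy (show b k ≤ b (k+1) by linarith)
    linarith
  unfold rampAux
  have hpos : (0:ℝ) < b (k+1) - b k := by linarith
  exact div_le_div_of_nonneg_right hnum hpos.le


lemma ctr_eq (hb0 : b 0 = 0) (hb : ∀ k, b k + 1 ≤ b (k+1)) {t : ℝ} {N : ℕ}
    (hN : ⌈t⌉₊ ≤ N) :
    ctrAux b t = (1/2) * ∑ k ∈ Finset.range N, rampAux b k t := by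
  rw [ctrAux]
  congr 1
  apply Finset.sum_subset (Finset.range_subset_range.2 hN)
  intro k _ hk
  have hk' : (⌈t⌉₊ : ℝ) ≤ k := by exact_mod_cast le_of_not_gt (fun h => hk (Finset.mem_range.2 h))
  exact ramp_zero hb (le_trans (Nat.le_ceil t) (hk'.trans (b_ge hb0 hb k)))

end

section
variable {b : ℕ → ℝ}

lemma ctr_b (hb0 : b 0 = 0) (hb : ∀ k, b k + 1 ≤ b (k+1)) (n : ℕ) :
    ctrAux b (b n) = n / 2 := by
  have hmono := b_mono' hb
  rw [ctr_eq hb0 hb (le_max_left ⌈b n⌉₊ n)]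
  have : ∑ k ∈ Finset.range (max ⌈b n⌉₊ n), rampAux b k (b n)
      = ∑ k ∈ Finset.range n, rampAux b k (b n) := by
    symm
    apply Finset.sum_subset (Finset.range_subset_range.2 (le_max_right _ _))
    intro k _ hk
    have : n ≤ k := le_of_not_gt (fun h => hk (Finset.mem_range.2 h))
    exact ramp_zero hb (hmono.monotone this)
  rw [this]
  have : ∑ k ∈ Finset.range n, rampAux b k (b n) = ∑ _k ∈ Finset.range n, (1:ℝ) := by
    apply Finset.sum_congr rfl
    intro k hk
    exact ramp_one hb (hmono.monotone (Finset.mem_range.1 hk))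
  rw [this, Finset.sum_const, Finset.card_range]
  ring

lemma ctr_mono (hb0 : b 0 = 0) (hb : ∀ k, b k + 1 ≤ b (k+1)) : Monotone (ctrAux b) := by
  intro x y hxy
  rw [ctr_eq hb0 hb (le_max_left ⌈x⌉₊ ⌈y⌉₊), ctr_eq hb0 hb (le_max_right ⌈x⌉₊ ⌈y⌉₊)]
  apply mul_le_mul_of_nonneg_left _ (by norm_num)
  exact Finset.sum_le_sum fun k _ => ramp_mono hb k hxy

lemma ctr_nonneg (hb : ∀ k, b k + 1 ≤ b (k+1)) (t : ℝ) : 0 ≤ ctrAux b t := by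
  rw [ctrAux]
  have : (0:ℝ) ≤ ∑ k ∈ Finset.range ⌈t⌉₊, rampAux b k t :=
    Finset.sum_nonneg fun k _ => ramp_nonneg hb k t
  linarith

lemma ctr_zero (hb0 : b 0 = 0) : ctrAux b 0 = 0 := by
  simp [ctrAux]

lemma ctr_lip (hb0 : b 0 = 0) (hb : ∀ k, b k + 1 ≤ b (k+1)) {x y : ℝ}
    (hx : 0 ≤ x) (hxy : x ≤ y) : ctrAux b y - ctrAux b x ≤ 1/2 * (y - x) := by
  set N := max ⌈x⌉₊ ⌈y⌉₊ with hN
  rw [ctr_eq hb0 hb (le_max_left ⌈x⌉₊ ⌈y⌉₊), ctr_eq hb0 hb (le_max_right ⌈x⌉₊ ⌈y⌉₊)]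
  rw [← mul_sub, ← Finset.sum_sub_distrib]
  have key : ∑ k ∈ Finset.range N, (rampAux b k y - rampAux b k x) ≤ y - x := by
    have step : ∀ k ∈ Finset.range N, rampAux b k y - rampAux b k x ≤
        (min y (b (k+1)) - min x (b (k+1))) - (min y (b k) - min x (b k)) := by
      intro k _
      have h := hb k
      have hpos : (0:ℝ) < b (k+1) - b k := by linarith
      have hnum : (0:ℝ) ≤ (min y (b (k+1)) - min x (b (k+1))) - (min y (b k) - min x (b k)) := by
        have := min_sub_min_mono hxy (show b k ≤ b (k+1) by linarith)
        linarith
      have : rampAux b k y - rampAux b k x =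
          ((min y (b (k+1)) - min x (b (k+1))) - (min y (b k) - min x (b k))) / (b (k+1) - b k) := by
        unfold rampAux
        field_simp
        ring
      rw [this]
      exact div_le_self hnum (by linarith)
    calc ∑ k ∈ Finset.range N, (rampAux b k y - rampAux b k x)
        ≤ ∑ k ∈ Finset.range N, ((min y (b (k+1)) - min x (b (k+1))) - (min y (b k) - min x (b k))) :=
          Finset.sum_le_sum step
      _ = (min y (b N) - min x (b N)) - (min y (b 0) - min x (b 0)) :=
          Finset.sum_range_sub (fun k => min y (b k) - min x (b k)) N
      _ ≤ y - x := by
          rw [hb0, min_eq_right hx, min_eq_right (hx.trans hxy)]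
          have := min_sub_min_le (c := b N) hxy
          linarith
  calc (1:ℝ)/2 * ∑ k ∈ Finset.range N, (rampAux b k y - rampAux b k x)
      ≤ 1/2 * (y - x) := by linarith

lemma exists_k (hb0 : b 0 = 0) (hb : ∀ k, b k + 1 ≤ b (k+1)) {x : ℝ} (hx : 0 ≤ x) :
    ∃ k, b k ≤ x ∧ x < b (k+1) := by
  have hP : ∃ k, x < b (k+1) := by
    refine ⟨⌈x⌉₊, lt_of_le_of_lt (Nat.le_ceil x) (lt_of_lt_of_le ?_ (b_ge hb0 hb (⌈x⌉₊+1)))⟩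
    push_cast; linarith
  refine ⟨Nat.find hP, ?_, Nat.find_spec hP⟩
  rcases Nat.eq_zero_or_eq_succ_pred (Nat.find hP) with h | h
  · rw [h, hb0]; exact hx
  · rw [h]
    exact le_of_not_gt (Nat.find_min hP (by omega))

lemma ctr_strict (hb0 : b 0 = 0) (hb : ∀ k, b k + 1 ≤ b (k+1)) :
    StrictMonoOn (ctrAux b) (Ici 0) := by
  intro x hx y _ hxy
  obtain ⟨k, hk1, hk2⟩ := exists_k hb0 hb (mem_Ici.1 hx)
  set N := max (max ⌈x⌉₊ ⌈y⌉₊) (k+1) with hN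
  rw [ctr_eq hb0 hb (le_trans (le_max_left _ _) (le_max_left _ _)),
      ctr_eq hb0 hb (le_trans (le_max_right ⌈x⌉₊ ⌈y⌉₊) (le_max_left _ _))]
  refine mul_lt_mul_of_pos_left ?_ (by norm_num)
  refine Finset.sum_lt_sum (fun j _ => ramp_mono hb j hxy.le)
    ⟨k, Finset.mem_range.2 (lt_of_lt_of_le (Nat.lt_succ_self k) (le_max_right _ _)), ?_⟩
  have h := hb k
  have hpos : (0:ℝ) < b (k+1) - b k := by linarith
  have hxm1 : min x (b (k+1)) = x := min_eq_left hk2.le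
  have hxm2 : min x (b k) = b k := min_eq_right hk1
  have hym2 : min y (b k) = b k := min_eq_right (hk1.trans hxy.le)
  have hlt : x < min y (b (k+1)) := lt_min hxy hk2
  unfold rampAux
  rw [hxm1, hxm2, hym2]
  exact (div_lt_div_iff_of_pos_right hpos).mpr (by linarith)

lemma ctr_lipOn (hb0 : b 0 = 0) (hb : ∀ k, b k + 1 ≤ b (k+1)) :
    LipschitzOnWith 1 (ctrAux b) (Ici 0) := by
  rw [lipschitzOnWith_iff_dist_le_mul]
  intro x hx y hy
  have key : ∀ u v : ℝ, 0 ≤ u → u ≤ v → dist (ctrAux b u) (ctrAux b v) ≤ dist u v := by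
    intro u v hu huv
    rw [Real.dist_eq, Real.dist_eq, abs_sub_comm, abs_of_nonneg (sub_nonneg.2 (ctr_mono hb0 hb huv)),
        abs_sub_comm, abs_of_nonneg (sub_nonneg.2 huv)]
    have := ctr_lip hb0 hb hu huv
    linarith
  simp only [NNReal.coe_one, one_mul]
  rcases le_total x y with h | h
  · exact key x y hx h
  · rw [dist_comm, dist_comm x y]; exact key y x hy h

lemma ctr_image (hb0 : b 0 = 0) (hb : ∀ k, b k + 1 ≤ b (k+1)) :
    ctrAux b '' Ici 0 = Ici 0 := by
  apply Subset.antisymm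
  · rintro _ ⟨x, _, rfl⟩
    exact ctr_nonneg hb x
  · intro y hy
    have hy0 : (0:ℝ) ≤ y := hy
    set n := 2 * ⌈y⌉₊ with hn
    have h1 : y ≤ ctrAux b (b n) := by
      rw [ctr_b hb0 hb n, hn]
      push_cast
      have := Nat.le_ceil y
      linarith
    have hbn : (0:ℝ) ≤ b n := b_nonneg hb0 hb n
    have cont : ContinuousOn (ctrAux b) (Icc 0 (b n)) :=
      ((ctr_lipOn hb0 hb).continuousOn).mono Icc_subset_Ici_self
    have : y ∈ Icc (ctrAux b 0) (ctrAux b (b n)) := by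
      rw [ctr_zero hb0]; exact ⟨hy0, h1⟩
    have := intermediate_value_Icc hbn cont this
    exact image_mono Icc_subset_Ici_self this

end


/-- Lemma 5.3 (radial contraction): if `𝒲` is a locally finite collection of subsets of
finite diameter of the ray `[0,∞)`, then there is a 1-Lipschitz homeomorphism
`f : [0,∞) → [0,∞)` (necessarily strictly increasing and onto) such that every set
`f(W)`, `W ∈ 𝒲`, has diameter at most `1`. -/
theorem radial_contraction (𝒲 : Set (Set ℝ))
    (hsub : ∀ W ∈ 𝒲, W ⊆ Ici (0 : ℝ))
    (hbdd : ∀ W ∈ 𝒲, Bornology.IsBounded W)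
    (hlf : ∀ x ∈ Ici (0 : ℝ), ∃ ε : ℝ, 0 < ε ∧
      {W ∈ 𝒲 | (W ∩ Metric.ball x ε).Nonempty}.Finite) :
    ∃ f : ℝ → ℝ, StrictMonoOn f (Ici 0) ∧ f '' Ici 0 = Ici 0 ∧
      LipschitzOnWith 1 f (Ici 0) ∧ ∀ W ∈ 𝒲, Metric.diam (f '' W) ≤ 1 := by
  classical
  -- Step 1: every compact initial segment meets only finitely many members of 𝒲
  have hfin : ∀ t : ℝ, 0 ≤ t → {W ∈ 𝒲 | (W ∩ Icc 0 t).Nonempty}.Finite := by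
    intro t ht
    have hch : ∀ x : Icc (0:ℝ) t, ∃ ε : ℝ, 0 < ε ∧
        {W ∈ 𝒲 | (W ∩ Metric.ball (x:ℝ) ε).Nonempty}.Finite :=
      fun x => hlf x (mem_Ici.2 x.2.1)
    choose ε hε hεfin using hch
    obtain ⟨s, hs⟩ := (isCompact_Icc (a := (0:ℝ)) (b := t)).elim_finite_subcover
      (fun x : Icc (0:ℝ) t => Metric.ball (x : ℝ) (ε x)) (fun x => Metric.isOpen_ball)
      (fun p hp => mem_iUnion.2 ⟨⟨p, hp⟩, Metric.mem_ball_self (hε ⟨p, hp⟩)⟩)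
    apply Set.Finite.subset (s.finite_toSet.biUnion (fun x _ => hεfin x))
    rintro W ⟨hW𝒲, p, hpW, hpI⟩
    obtain ⟨x, hxs, hpball⟩ := mem_iUnion₂.1 (hs hpI)
    exact mem_iUnion₂.2 ⟨x, hxs, hW𝒲, p, hpW, hpball⟩
  -- Step 2: a bound function
  have key : ∀ t : ℝ, ∃ C, max t 0 + 1 ≤ C ∧
      ∀ W ∈ 𝒲, (W ∩ Icc 0 (max t 0)).Nonempty → W ⊆ Iic C := by
    intro t
    set t' := max t 0 with ht'
    have ht'0 : 0 ≤ t' := le_max_right t 0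
    have hS := hfin t' ht'0
    obtain ⟨m, hm⟩ := (hS.image sSup).bddAbove
    refine ⟨max (t' + 1) m, le_max_left _ _, ?_⟩
    intro W hW hWne x hx
    have hWS : W ∈ {W ∈ 𝒲 | (W ∩ Icc 0 t').Nonempty} := ⟨hW, hWne⟩
    have h1 : x ≤ sSup W := le_csSup (hbdd W hW).bddAbove hx
    have h2 : sSup W ≤ m := hm (mem_image_of_mem sSup hWS)
    exact le_trans (h1.trans h2) (le_max_right _ _)
  choose G hG1 hG2 using key
  -- Step 3: the sequence of breakpoints
  set b : ℕ → ℝ := fun n => Nat.rec 0 (fun _ t => G t) n with hbdef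
  have hb0 : b 0 = 0 := rfl
  have hbsucc : ∀ k, b (k+1) = G (b k) := fun k => rfl
  have hbnn : ∀ k, 0 ≤ b k := by
    intro k
    induction k with
    | zero => exact le_of_eq hb0.symm
    | succ n ih =>
      rw [hbsucc n]
      have := hG1 (b n)
      have : max (b n) 0 + 1 ≤ G (b n) := hG1 (b n)
      have h2 : 0 ≤ max (b n) 0 := le_max_right _ _
      linarith
  have hb : ∀ k, b k + 1 ≤ b (k+1) := by
    intro k
    rw [hbsucc k]
    have := hG1 (b k)
    rw [max_eq_left (hbnn k)] at this
    exact this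
  have hbabs : ∀ k, ∀ W ∈ 𝒲, (W ∩ Icc 0 (b k)).Nonempty → W ⊆ Iic (b (k+1)) := by
    intro k W hW hne
    rw [hbsucc k]
    apply hG2 (b k) W hW
    rwa [max_eq_left (hbnn k)]
  -- Step 4: assemble
  refine ⟨ctrAux b, ctr_strict hb0 hb, ctr_image hb0 hb, ctr_lipOn hb0 hb, ?_⟩
  intro W hW
  apply Metric.diam_le_of_forall_dist_le zero_le_one
  have claim : ∀ u ∈ W, ∀ v ∈ W, u ≤ v → dist (ctrAux b u) (ctrAux b v) ≤ 1 := by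
    intro u hu v hv huv
    have hu0 : (0:ℝ) ≤ u := hsub W hW hu
    obtain ⟨k, hk1, hk2⟩ := exists_k hb0 hb hu0
    have hWsub : W ⊆ Iic (b (k+2)) :=
      hbabs (k+1) W hW ⟨u, hu, ⟨hu0, hk2.le⟩⟩
    have hv2 : v ≤ b (k+2) := hWsub hv
    have h1 : (k:ℝ)/2 ≤ ctrAux b u := by
      rw [← ctr_b hb0 hb k]; exact ctr_mono hb0 hb hk1
    have h2 : ctrAux b v ≤ ((k:ℝ)+2)/2 := by
      have := ctr_mono hb0 hb hv2
      rw [ctr_b hb0 hb (k+2)] at this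
      push_cast at this ⊢
      linarith
    have h3 : ctrAux b u ≤ ctrAux b v := ctr_mono hb0 hb huv
    rw [Real.dist_eq]
    rw [abs_le]
    constructor <;> linarith
  rintro p ⟨u, hu, rfl⟩ q ⟨v, hv, rfl⟩
  rcases le_total u v with h | h
  · exact claim u hu v hv h
  · rw [dist_comm]; exact claim v hv u hu h
end
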